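/- arXiv:1402.2569 — 6 statements merged into one kernel-verified Lean document; each statement's English description precedes it below -/
import Mathlib

section
/- For all integers k ≥ 3, p ≥ 0, and 0 ≤ i ≤ k-1, one has (i+pk)!/√((i+pk-k)!·(i+pk+k)!) + √((i+pk)!/(i+pk+k)!) - 1 < 0. -/
open Nat

lemma aux_L1 (n k : ℕ) (hk1 : 1 ≤ k) (hkn : k ≤ n) :
    n ! * n ! * (n + 1) ≤ (n - k)! * (n + k)! * (n - k + 1) := by
  obtain ⟨j, rfl⟩ : ∃ j, k = j + 1 := ⟨k - 1, by omega⟩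
  have h1 : (n - (j + 1))! * n.descFactorial (j + 1) = n ! :=
    Nat.factorial_mul_descFactorial hkn
  have h2 : n ! * (n + (j + 1)).descFactorial (j + 1) = (n + (j + 1))! := by
    have := Nat.factorial_mul_descFactorial (show j + 1 ≤ n + (j + 1) by omega)
    simpa using this
  rw [Nat.descFactorial_succ] at h1 h2
  have hnj : n - j = n - (j + 1) + 1 := by omega
  have hnkj : n + (j + 1) - j = n + 1 := by omega
  rw [hnj] at h1
  rw [hnkj] at h2
  have hmono : n.descFactorial j ≤ (n + (j + 1)).descFactorial j :=
    Nat.descFactorial_le _ (by omega)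
  calc n ! * n ! * (n + 1)
      = (n - (j + 1))! * (n - (j + 1) + 1) * (n ! * (n + 1)) * n.descFactorial j := by
        rw [← h1]; ring
    _ ≤ (n - (j + 1))! * (n - (j + 1) + 1) * (n ! * (n + 1)) *
          (n + (j + 1)).descFactorial j := Nat.mul_le_mul_left _ hmono
    _ = (n - (j + 1))! * (n + (j + 1))! * (n - (j + 1) + 1) := by rw [← h2]; ring

lemma aux_L2 (n k : ℕ) : n ! * (n + 1) ^ k ≤ (n + k)! := by
  have h := Nat.pow_sub_le_descFactorial (n + k) k
  have he : n + k + 1 - k = n + 1 := by omega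
  rw [he] at h
  calc n ! * (n + 1) ^ k ≤ n ! * (n + k).descFactorial k :=
        Nat.mul_le_mul_left _ h
    _ = (n + k)! := by
        have := Nat.factorial_mul_descFactorial (show k ≤ n + k by omega)
        simpa using this

set_option maxHeartbeats 1000000 in
theorem stmt_0 (k i p : ℕ) (hk : 3 ≤ k) (hi : i ≤ k - 1) (hip : k ≤ i + p * k) :
    ((i + p * k)! : ℝ) / Real.sqrt (((i + p * k - k)! : ℝ) * ((i + p * k + k)! : ℝ))
      + Real.sqrt (((i + p * k)! : ℝ) / ((i + p * k + k)! : ℝ)) - 1 < 0 := by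
  set n := i + p * k with hn
  have hkn : k ≤ n := hip
  have hn4 : (4 : ℕ) ≤ n + 1 := by omega
  -- real positivity facts
  have hF1 : (0 : ℝ) < ((n - k)! : ℝ) := by exact_mod_cast (n - k).factorial_pos
  have hF2 : (0 : ℝ) < ((n)! : ℝ) := by exact_mod_cast n.factorial_pos
  have hF3 : (0 : ℝ) < ((n + k)! : ℝ) := by exact_mod_cast (n + k).factorial_pos
  have hprod : (0 : ℝ) < ((n - k)! : ℝ) * ((n + k)! : ℝ) := mul_pos hF1 hF3
  set a : ℝ := ((n)! : ℝ) / Real.sqrt (((n - k)! : ℝ) * ((n + k)! : ℝ)) with hadef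
  set b : ℝ := Real.sqrt (((n)! : ℝ) / ((n + k)! : ℝ)) with hbdef
  have hnpos : (0 : ℝ) < (n : ℝ) + 1 := by positivity
  set c : ℝ := (k : ℝ) / (2 * ((n : ℝ) + 1)) with hcdef
  have hcpos : 0 < c := by positivity
  have hchalf : c ≤ 1 / 2 := by
    rw [hcdef, div_le_div_iff₀ (by positivity) (by norm_num)]
    have : (k : ℝ) ≤ (n : ℝ) + 1 := by exact_mod_cast by omega
    linarith
  have ha_nonneg : 0 ≤ a := by positivity
  have hb_nonneg : 0 ≤ b := Real.sqrt_nonneg _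
  -- a² bound
  have ha2 : a ^ 2 = ((n)! : ℝ) ^ 2 / (((n - k)! : ℝ) * ((n + k)! : ℝ)) := by
    rw [hadef, div_pow, Real.sq_sqrt hprod.le]
  have hL1 : ((n)! : ℝ) * ((n)! : ℝ) * ((n : ℝ) + 1)
      ≤ ((n - k)! : ℝ) * ((n + k)! : ℝ) * (((n : ℝ) - k) + 1) := by
    have h := aux_L1 n k (by omega) hkn
    have hcast : ((n - k : ℕ) : ℝ) = (n : ℝ) - k := Nat.cast_sub hkn
    calc ((n)! : ℝ) * ((n)! : ℝ) * ((n : ℝ) + 1)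
        = ((n ! * n ! * (n + 1) : ℕ) : ℝ) := by push_cast; ring
      _ ≤ (((n - k)! * (n + k)! * (n - k + 1) : ℕ) : ℝ) := by exact_mod_cast h
      _ = ((n - k)! : ℝ) * ((n + k)! : ℝ) * (((n : ℝ) - k) + 1) := by
          push_cast [hcast]; ring
  have hA2 : a ^ 2 ≤ (1 - c) ^ 2 := by
    have h1 : a ^ 2 ≤ (((n : ℝ) - k) + 1) / ((n : ℝ) + 1) := by
      rw [ha2, div_le_div_iff₀ hprod hnpos]
      nlinarith [hL1]
    have h2 : (((n : ℝ) - k) + 1) / ((n : ℝ) + 1) ≤ (1 - c) ^ 2 := by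
      rw [div_le_iff₀ hnpos]
      have hc_eq : c * (2 * ((n : ℝ) + 1)) = (k : ℝ) := by
        rw [hcdef]; field_simp
      nlinarith [sq_nonneg c, hc_eq, mul_nonneg (sq_nonneg c) hnpos.le]
    linarith
  have hA : a ≤ 1 - c := by
    have h1c : 0 ≤ 1 - c := by linarith
    nlinarith [hA2, ha_nonneg, h1c]
  -- b bound
  have hb2 : b ^ 2 = ((n)! : ℝ) / ((n + k)! : ℝ) := by
    rw [hbdef, Real.sq_sqrt (by positivity)]
  have hL2 : ((n)! : ℝ) * ((n : ℝ) + 1) ^ k ≤ ((n + k)! : ℝ) := by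
    have h := aux_L2 n k
    calc ((n)! : ℝ) * ((n : ℝ) + 1) ^ k = ((n ! * (n + 1) ^ k : ℕ) : ℝ) := by push_cast; ring
      _ ≤ ((n + k)! : ℝ) := by exact_mod_cast h
  have hB2 : b ^ 2 < c ^ 2 := by
    have h1 : b ^ 2 ≤ 1 / ((n : ℝ) + 1) ^ k := by
      rw [hb2, div_le_div_iff₀ hF3 (by positivity)]
      rw [one_mul]; exact hL2
    have h2 : 1 / ((n : ℝ) + 1) ^ k < c ^ 2 := by
      have hpow : ((n : ℝ) + 1) ^ 3 ≤ ((n : ℝ) + 1) ^ k :=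
        pow_le_pow_right₀ (by linarith) hk
      have hk9 : (9 : ℝ) ≤ (k : ℝ) ^ 2 := by
        have : (3 : ℝ) ≤ (k : ℝ) := by exact_mod_cast hk
        nlinarith
      have hn4' : (4 : ℝ) ≤ (n : ℝ) + 1 := by exact_mod_cast hn4
      have hkey : 9 * ((n : ℝ) + 1) ^ 3 ≤ (k : ℝ) ^ 2 * ((n : ℝ) + 1) ^ k := by
        have := mul_le_mul hk9 hpow (by positivity) (by positivity)
        linarith
      have hkey2 : 4 * ((n : ℝ) + 1) ^ 2 < (k : ℝ) ^ 2 * ((n : ℝ) + 1) ^ k := by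
        nlinarith [hkey, hn4', sq_nonneg ((n : ℝ) + 1)]
      rw [hcdef, div_pow, div_lt_div_iff₀ (by positivity) (by positivity)]
      calc 1 * (2 * ((n : ℝ) + 1)) ^ 2 = 4 * ((n : ℝ) + 1) ^ 2 := by ring
        _ < (k : ℝ) ^ 2 * ((n : ℝ) + 1) ^ k := hkey2
    linarith
  have hB : b < c := by nlinarith [hB2, hb_nonneg, hcpos]
  linarith
end

section
/- For k = 1 and any t > 0, and for k = 2 and any 0 < t < 1/(2√2), the series ∑_{n=0}^∞ (t^n/n!)·√2·k^{n/2}·√((i+(p+n)k)!/(i+pk)!) converges; for k ≥ 3 and any t > 0, the series ∑_{n=0}^∞ (t^n/n!)·√((i+(p+n)k)!/(i+pk)!) diverges. -/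
open Nat Filter

private lemma sqrtSqMul {c : ℝ} (hc : 0 ≤ c) (x : ℝ) :
    Real.sqrt (c ^ 2 * x) = c * Real.sqrt x := by
  rw [Real.sqrt_mul (sq_nonneg c), Real.sqrt_sq hc]

private lemma sqrt_le_of_sq {a b c : ℝ} (hc : 0 ≤ c) (h : a ≤ c ^ 2 * b) :
    Real.sqrt a ≤ c * Real.sqrt b := by
  rw [← sqrtSqMul hc]; exact Real.sqrt_le_sqrt h

private lemma mul_sqrt_le {a b c : ℝ} (hc : 0 ≤ c) (h : c ^ 2 * b ≤ a) :
    c * Real.sqrt b ≤ Real.sqrt a := by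
  rw [← sqrtSqMul hc]; exact Real.sqrt_le_sqrt h

private lemma fact_lower (a k : ℕ) : (a + 1) ^ k * a ! ≤ (a + k)! := by
  induction k with
  | zero => simp
  | succ k ih =>
    calc (a+1)^(k+1) * a ! = (a+1) * ((a+1)^k * a !) := by ring
      _ ≤ (a+1) * (a+k)! := Nat.mul_le_mul_left _ ih
      _ ≤ (a+k+1) * (a+k)! := Nat.mul_le_mul_right _ (by omega)
      _ = (a+k+1)! := (Nat.factorial_succ _).symm

private lemma aux1 (m : ℕ) {u : ℝ} (hu : 0 < u) :
    Summable (fun n : ℕ => u ^ n / n ! * Real.sqrt ((m + n)! : ℝ)) := by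
  apply summable_of_ratio_norm_eventually_le (r := 1/2) (by norm_num)
  rw [eventually_atTop]
  refine ⟨max m ⌈8 * u ^ 2⌉₊, fun n hn => ?_⟩
  have hm : (m : ℝ) ≤ n := by exact_mod_cast le_trans (le_max_left _ _) hn
  have h8 : 8 * u ^ 2 ≤ n :=
    le_trans (Nat.le_ceil _) (by exact_mod_cast le_trans (le_max_right _ _) hn)
  have hn1 : (0:ℝ) < (n:ℝ) + 1 := by positivity
  have hfac : (0:ℝ) < (n ! : ℝ) := by exact_mod_cast n.factorial_pos
  set c : ℝ := ((n:ℝ) + 1) / (2 * u) with hc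
  have hc0 : 0 ≤ c := by positivity
  have key : ((m + (n+1))! : ℝ) ≤ c ^ 2 * ((m + n)! : ℝ) := by
    have h1 : (m + (n+1))! = (m + n + 1) * (m + n)! := by
      rw [show m + (n+1) = (m+n) + 1 by ring, Nat.factorial_succ]
    rw [h1]
    push_cast
    have hA : (0:ℝ) ≤ ((m+n)! : ℝ) := by positivity
    have h2 : ((m:ℝ) + n + 1) ≤ c ^ 2 := by
      rw [hc, div_pow, le_div_iff₀ (by positivity)]
      nlinarith [mul_nonneg (sq_nonneg u) (sub_nonneg.mpr hm)]
    nlinarith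
  have hsqrt := sqrt_le_of_sq hc0 key
  rw [Real.norm_of_nonneg (by positivity), Real.norm_of_nonneg (by positivity)]
  calc u ^ (n+1) / ((n+1)! : ℝ) * Real.sqrt ((m + (n+1))! : ℝ)
      ≤ u ^ (n+1) / ((n+1)! : ℝ) * (c * Real.sqrt ((m + n)! : ℝ)) := by
        apply mul_le_mul_of_nonneg_left hsqrt (by positivity)
    _ = 1/2 * (u ^ n / (n ! : ℝ) * Real.sqrt ((m + n)! : ℝ)) := by
        rw [Nat.factorial_succ, hc]
        push_cast
        field_simp
        ring

private lemma aux2 (m : ℕ) {u : ℝ} (hu : 0 < u) (hu2 : 2 * u < 1) :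
    Summable (fun n : ℕ => u ^ n / n ! * Real.sqrt ((m + 2 * n)! : ℝ)) := by
  set r : ℝ := (1 + 2 * u) / 2 with hr
  have hru : 2 * u < r := by rw [hr]; linarith
  have hr1 : r < 1 := by rw [hr]; linarith
  have hr0 : 0 < r := by rw [hr]; linarith
  apply summable_of_ratio_norm_eventually_le hr1
  rw [eventually_atTop]
  refine ⟨⌈u * (m + 2) / (r - 2*u)⌉₊, fun n hn => ?_⟩
  have hN : u * (m + 2) / (r - 2*u) ≤ n :=
    le_trans (Nat.le_ceil _) (by exact_mod_cast hn)
  have hkey : u * ((m:ℝ) + 2 * n + 2) ≤ r * ((n:ℝ) + 1) := by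
    rw [div_le_iff₀ (by linarith)] at hN
    nlinarith
  have hn1 : (0:ℝ) < (n:ℝ) + 1 := by positivity
  set c : ℝ := r * ((n:ℝ) + 1) / u with hc
  have hc0 : 0 ≤ c := by positivity
  have key : ((m + 2 * (n+1))! : ℝ) ≤ c ^ 2 * ((m + 2 * n)! : ℝ) := by
    have h1 : (m + 2 * (n+1))! = (m + 2*n + 2) * ((m + 2*n + 1) * (m + 2*n)!) := by
      rw [show m + 2*(n+1) = (m + 2*n + 1) + 1 by ring, Nat.factorial_succ, Nat.factorial_succ]
    rw [h1]
    push_cast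
    have hA : (0:ℝ) ≤ ((m + 2*n)! : ℝ) := by positivity
    have h3 : u * ((m:ℝ) + 2 * n + 1) ≤ r * ((n:ℝ) + 1) := by linarith
    have h2 : ((m:ℝ) + 2*n + 2) * ((m:ℝ) + 2*n + 1) ≤ c ^ 2 := by
      rw [hc, div_pow, le_div_iff₀ (by positivity)]
      nlinarith [mul_le_mul hkey h3 (by positivity : (0:ℝ) ≤ u * ((m:ℝ) + 2 * n + 1)) (by positivity : (0:ℝ) ≤ r * ((n:ℝ) + 1))]
    nlinarith
  have hsqrt := sqrt_le_of_sq hc0 key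
  rw [Real.norm_of_nonneg (by positivity), Real.norm_of_nonneg (by positivity)]
  calc u ^ (n+1) / ((n+1)! : ℝ) * Real.sqrt ((m + 2 * (n+1))! : ℝ)
      ≤ u ^ (n+1) / ((n+1)! : ℝ) * (c * Real.sqrt ((m + 2 * n)! : ℝ)) := by
        apply mul_le_mul_of_nonneg_left hsqrt (by positivity)
    _ = r * (u ^ n / (n ! : ℝ) * Real.sqrt ((m + 2 * n)! : ℝ)) := by
        rw [Nat.factorial_succ, hc]
        push_cast
        have hfac : ((n:ℕ)! : ℝ) ≠ 0 := by positivity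
        field_simp
        ring

private lemma aux3 (m k : ℕ) (hk : 3 ≤ k) {t : ℝ} (ht : 0 < t) :
    ¬ Summable (fun n : ℕ => t ^ n / n ! * Real.sqrt ((m + n * k)! : ℝ)) := by
  apply not_summable_of_ratio_norm_eventually_ge (r := 2) one_lt_two
  · apply Eventually.frequently
    filter_upwards with n
    have hpos : 0 < t ^ n / (n ! : ℝ) * Real.sqrt ((m + n * k)! : ℝ) := by
      have : (0:ℝ) < ((m + n * k)! : ℝ) := by exact_mod_cast (m + n*k).factorial_pos
      positivity
    rw [Real.norm_of_nonneg hpos.le]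
    exact hpos.ne'
  · rw [eventually_atTop]
    refine ⟨⌈4 / t ^ 2⌉₊, fun n hn => ?_⟩
    have hN : 4 / t ^ 2 ≤ n := le_trans (Nat.le_ceil _) (by exact_mod_cast hn)
    have ht4 : 4 ≤ t ^ 2 * ((n:ℝ) + 1) := by
      rw [div_le_iff₀ (by positivity)] at hN
      nlinarith
    have hn1 : (0:ℝ) < (n:ℝ) + 1 := by positivity
    set a := m + n * k with ha
    have hNat : (n+1) ^ 3 * a ! ≤ (m + (n+1) * k)! := by
      have h1 : m + (n+1) * k = a + k := by rw [ha]; ring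
      rw [h1]
      refine le_trans ?_ (fact_lower a k)
      apply Nat.mul_le_mul_right
      calc (n+1) ^ 3 ≤ (a+1) ^ 3 := Nat.pow_le_pow_left (by
            have : n ≤ n * k := Nat.le_mul_of_pos_right n (by omega)
            omega) 3
        _ ≤ (a+1) ^ k := Nat.pow_le_pow_right (by omega) hk
    set c : ℝ := 2 * ((n:ℝ) + 1) / t with hc
    have hc0 : 0 ≤ c := by positivity
    have key : c ^ 2 * (a ! : ℝ) ≤ ((m + (n+1) * k)! : ℝ) := by
      have h2 : (((n+1) ^ 3 * a ! : ℕ) : ℝ) ≤ ((m + (n+1) * k)! : ℝ) := by exact_mod_cast hNat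
      push_cast at h2
      refine le_trans ?_ h2
      have hA : (0:ℝ) ≤ (a ! : ℝ) := by positivity
      have hcoef : c ^ 2 ≤ ((n:ℝ) + 1) ^ 3 := by
        rw [hc, div_pow, div_le_iff₀ (by positivity)]
        nlinarith [mul_le_mul_of_nonneg_left ht4 (sq_nonneg ((n:ℝ) + 1))]
      exact mul_le_mul_of_nonneg_right hcoef hA
    have hsqrt := mul_sqrt_le hc0 key
    rw [Real.norm_of_nonneg (by positivity), Real.norm_of_nonneg (by positivity)]
    calc 2 * (t ^ n / (n ! : ℝ) * Real.sqrt ((m + n * k)! : ℝ))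
        = t ^ (n+1) / ((n+1)! : ℝ) * (c * Real.sqrt ((m + n * k)! : ℝ)) := by
          rw [Nat.factorial_succ, hc]
          push_cast
          field_simp
          ring
      _ ≤ t ^ (n+1) / ((n+1)! : ℝ) * Real.sqrt ((m + (n+1) * k)! : ℝ) := by
          apply mul_le_mul_of_nonneg_left hsqrt (by positivity)

/-- Part 1 (k = 1, entire vectors) and (k = 2, analytic vectors): the majorizing series
converges; Part 2 (k ≥ 3): the minorizing series diverges. -/
theorem stmt_4 :
    (∀ (i p : ℕ) (t : ℝ), i ≤ 1 - 1 → 0 < t →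
      Summable (fun n : ℕ =>
        t ^ n / (n ! : ℝ) * Real.sqrt 2 * (1 : ℝ) ^ ((n : ℝ) / 2) *
          Real.sqrt (((i + (p + n) * 1)! : ℝ) / ((i + p * 1)! : ℝ)))) ∧
    (∀ (i p : ℕ) (t : ℝ), i ≤ 2 - 1 → 0 < t → t < 1 / (2 * Real.sqrt 2) →
      Summable (fun n : ℕ =>
        t ^ n / (n ! : ℝ) * Real.sqrt 2 * (2 : ℝ) ^ ((n : ℝ) / 2) *
          Real.sqrt (((i + (p + n) * 2)! : ℝ) / ((i + p * 2)! : ℝ)))) ∧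
    (∀ (k i p : ℕ) (t : ℝ), 3 ≤ k → i ≤ k - 1 → 0 < t →
      ¬ Summable (fun n : ℕ =>
        t ^ n / (n ! : ℝ) *
          Real.sqrt (((i + (p + n) * k)! : ℝ) / ((i + p * k)! : ℝ)))) := by
  refine ⟨?_, ?_, ?_⟩
  · intro i p t _ ht
    refine ((aux1 (i + p * 1) ht).mul_right
      (Real.sqrt 2 / Real.sqrt ((i + p * 1)! : ℝ))).congr (fun n => ?_)
    have h1 : i + (p + n) * 1 = i + p * 1 + n := by ring
    rw [h1, Real.one_rpow,
      Real.sqrt_div (by positivity : (0:ℝ) ≤ ((i + p * 1 + n)! : ℝ))]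
    ring
  · intro i p t _ ht ht2
    have hs2 : (0:ℝ) < Real.sqrt 2 := by positivity
    have hu : 0 < Real.sqrt 2 * t := by positivity
    have hu2 : 2 * (Real.sqrt 2 * t) < 1 := by
      have h2 : (0:ℝ) < 2 * Real.sqrt 2 := by positivity
      calc 2 * (Real.sqrt 2 * t) = (2 * Real.sqrt 2) * t := by ring
        _ < (2 * Real.sqrt 2) * (1 / (2 * Real.sqrt 2)) :=
            mul_lt_mul_of_pos_left ht2 h2
        _ = 1 := by field_simp
    refine ((aux2 (i + p * 2) hu hu2).mul_right
      (Real.sqrt 2 / Real.sqrt ((i + p * 2)! : ℝ))).congr (fun n => ?_)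
    have h1 : i + (p + n) * 2 = i + p * 2 + 2 * n := by ring
    have h2 : (2:ℝ) ^ ((n : ℝ) / 2) = (Real.sqrt 2) ^ n := by
      rw [Real.sqrt_eq_rpow, ← Real.rpow_natCast ((2:ℝ) ^ ((1:ℝ)/2)) n,
        ← Real.rpow_mul (by norm_num)]
      congr 1
      ring
    rw [h1, h2,
      Real.sqrt_div (by positivity : (0:ℝ) ≤ ((i + p * 2 + 2 * n)! : ℝ))]
    rw [mul_pow]
    ring
  · intro k i p t hk _ ht h
    have hs : Real.sqrt ((i + p * k)! : ℝ) ≠ 0 := by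
      have : (0:ℝ) < ((i + p * k)! : ℝ) := by exact_mod_cast (i + p*k).factorial_pos
      positivity
    refine aux3 (i + p * k) k hk ht ((h.mul_right (Real.sqrt ((i + p * k)! : ℝ))).congr
      (fun n => ?_))
    have h1 : i + (p + n) * k = i + p * k + n * k := by ring
    rw [h1, Real.sqrt_div (by positivity : (0:ℝ) ≤ ((i + p * k + n * k)! : ℝ))]
    field_simp
end

section
/- Fix k ≥ 3 and 0 ≤ i ≤ k-1, and let (d_p) be the positive solution of the recurrence d_{p+1} = ((i+pk)!/√((i+pk-k)!·(i+pk+k)!))·d_{p-1} + √((i+pk)!/(i+pk+k)!)·d_p with d_{-1}=0, d_0=1. Then for all p ≥ 1, d_{p+1} - d_{p-1} < α_p·α_{p-1}·…·α_0·(d_2 - d_0), where α_p = √((i+pk)!/(i+pk+k)!). -/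
open Nat Finset

namespace Stmt9Aux

/-- `ff a t = (a+1)(a+2)⋯(a+t)`. -/
def ff (a t : ℕ) : ℕ := ∏ j ∈ Finset.range t, (a + j + 1)

lemma ff_zero (a : ℕ) : ff a 0 = 1 := by simp [ff]

lemma ff_succ (a t : ℕ) : ff a (t + 1) = ff a t * (a + t + 1) :=
  Finset.prod_range_succ _ _

lemma ff_pos (a t : ℕ) : 0 < ff a t := by
  induction t with
  | zero => simp [ff_zero]
  | succ t ih => rw [ff_succ]; positivity

lemma one_le_ff (a t : ℕ) : 1 ≤ ff a t := ff_pos a t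

lemma factorial_mul_ff (a t : ℕ) : a ! * ff a t = (a + t)! := by
  induction t with
  | zero => simp [ff_zero]
  | succ t ih =>
      rw [ff_succ, ← mul_assoc, ih, show a + (t + 1) = (a + t) + 1 by ring,
        Nat.factorial_succ]
      ring

lemma ff_mono {a b : ℕ} (t : ℕ) (h : a ≤ b) : ff a t ≤ ff b t := by
  induction t with
  | zero => simp [ff_zero]
  | succ t ih => rw [ff_succ, ff_succ]; exact Nat.mul_le_mul ih (by omega)

lemma ff_add (a s t : ℕ) : ff a (s + t) = ff a s * ff (a + s) t := by
  induction t with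
  | zero => simp [ff_zero]
  | succ t ih =>
      rw [show s + (t+1) = (s+t) + 1 by ring, ff_succ, ih, ff_succ, mul_assoc]
      congr 2
      ring

lemma ff_three (a : ℕ) : ff a 3 = (a+1) * ((a+2) * (a+3)) := by
  show ff a (2+1) = _
  rw [ff_succ, show (2:ℕ) = 1 + 1 by rfl, ff_succ, ff_succ, ff_zero]
  ring

lemma ff_split3 (a t : ℕ) (h : 3 ≤ t) : ff a t = ff a 3 * ff (a + 3) (t - 3) := by
  rw [← ff_add, show 3 + (t - 3) = t by omega]

lemma ff_mul_ff_le (a b c t : ℕ) (h : ∀ s, c + s + 1 ≤ (a + s + 1) * (b + s + 1)) :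
    ff c t ≤ ff a t * ff b t := by
  induction t with
  | zero => simp [ff_zero]
  | succ t ih =>
      rw [ff_succ, ff_succ, ff_succ]
      calc ff c t * (c + t + 1) ≤ (ff a t * ff b t) * ((a + t + 1) * (b + t + 1)) :=
            Nat.mul_le_mul ih (h t)
        _ = ff a t * (a + t + 1) * (ff b t * (b + t + 1)) := by ring

lemma ff_log_concave (a c t : ℕ) : ff a t * ff (a + 2*c) t ≤ ff (a + c) t * ff (a + c) t := by
  induction t with
  | zero => simp [ff_zero]
  | succ t ih =>
      rw [ff_succ, ff_succ, ff_succ]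
      calc ff a t * (a + t + 1) * (ff (a + 2*c) t * (a + 2*c + t + 1))
          = (ff a t * ff (a + 2*c) t) * ((a + t + 1) * (a + 2*c + t + 1)) := by ring
        _ ≤ (ff (a+c) t * ff (a+c) t) * ((a + c + t + 1) * (a + c + t + 1)) := by
            apply Nat.mul_le_mul ih
            nlinarith
        _ = ff (a+c) t * (a + c + t + 1) * (ff (a+c) t * (a + c + t + 1)) := by ring


section
variable {k i : ℕ}

lemma pow_step (q : ℕ) : 27*(q+4)^3 ≤ 64*(q+3)^3 := by
  have h := Nat.pow_le_pow_left (show 3*(q+4) ≤ 4*(q+3) by omega) 3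
  calc 27*(q+4)^3 = (3*(q+4))^3 := by ring
    _ ≤ (4*(q+3))^3 := h
    _ = 64*(q+3)^3 := by ring

lemma numeric1 (q : ℕ) : 320*(q+4)^3 ≤ 324*(q+3)^4 := by
  have h1 := pow_step q
  have key : 27*(320*(q+4)^3) ≤ 27*(324*(q+3)^4) := by
    calc 27*(320*(q+4)^3) = 320*(27*(q+4)^3) := by ring
      _ ≤ 320*(64*(q+3)^3) := Nat.mul_le_mul_left _ h1
      _ = 20480*(q+3)^3 := by ring
      _ ≤ (8748*(q+3))*(q+3)^3 := Nat.mul_le_mul_right _ (by omega)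
      _ = 27*(324*(q+3)^4) := by ring
  omega

lemma numeric2 (q : ℕ) : 2048*(q+4)^3 ≤ 54*(q+3)*(3*q+11)^3 := by
  have h2 := Nat.pow_le_pow_left (show 11*(q+4) ≤ 4*(3*q+11) by omega) 3
  have key : 64*(2048*(q+4)^3) ≤ 64*(54*(q+3)*(3*q+11)^3) := by
    calc 64*(2048*(q+4)^3) = 131072*(q+4)^3 := by ring
      _ ≤ (71874*(q+3))*(q+4)^3 := Nat.mul_le_mul_right _ (by omega)
      _ = 54*(q+3)*(1331*(q+4)^3) := by ring
      _ = 54*(q+3)*((11*(q+4))^3) := by ring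
      _ ≤ 54*(q+3)*((4*(3*q+11))^3) := Nat.mul_le_mul_left _ h2
      _ = 64*(54*(q+3)*(3*q+11)^3) := by ring
  omega

/-- N3 (index shifted: corresponds to `B_{q+1}`): front factors. -/
lemma n3 (hk : 3 ≤ k) (hi : i + 1 ≤ k) (q : ℕ) :
    (q+3)^3 * ff (i + q*k) k ≤ (q+2)^3 * ff (i + q*k + k) k := by
  have front : (q+3)^3 * ff (i + q*k) 3 ≤ (q+2)^3 * ff (i + q*k + k) 3 := by
    rw [ff_three, ff_three]
    have h1 : (q+3) * (i + q*k + 1) ≤ (q+2) * (i + q*k + k + 1) := by nlinarith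
    have h2 : (q+3) * (i + q*k + 2) ≤ (q+2) * (i + q*k + k + 2) := by nlinarith
    have h3 : (q+3) * (i + q*k + 3) ≤ (q+2) * (i + q*k + k + 3) := by nlinarith
    calc (q+3)^3 * ((i + q*k + 1) * ((i + q*k + 2) * (i + q*k + 3)))
        = ((q+3)*(i + q*k+1)) * (((q+3)*(i + q*k+2)) * ((q+3)*(i + q*k+3))) := by ring
      _ ≤ ((q+2)*(i + q*k + k+1)) * (((q+2)*(i + q*k + k+2)) * ((q+2)*(i + q*k + k+3))) :=
          Nat.mul_le_mul h1 (Nat.mul_le_mul h2 h3)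
      _ = (q+2)^3 * ((i + q*k + k+1) * ((i + q*k + k+2) * (i + q*k + k+3))) := by ring
  have tail : ff (i + q*k + 3) (k-3) ≤ ff (i + q*k + k + 3) (k-3) := ff_mono _ (by omega)
  calc (q+3)^3 * ff (i + q*k) k = ((q+3)^3 * ff (i + q*k) 3) * ff (i + q*k + 3) (k-3) := by
        rw [ff_split3 (i + q*k) k hk]; ring
    _ ≤ ((q+2)^3 * ff (i + q*k + k) 3) * ff (i + q*k + k + 3) (k-3) := Nat.mul_le_mul front tail
    _ = (q+2)^3 * ff (i + q*k + k) k := by rw [ff_split3 (i + q*k + k) k hk]; ring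


/-- N1 at original index `q+2`. -/
lemma n1 (hk : 3 ≤ k) (hi : i + 1 ≤ k) (q : ℕ) :
    4*(q+4)^3 * ff i k ≤ 9*(q+3) * ff (i + (q+2)*k) k := by
  have ha : 9*(q+3)^3 * ff i k ≤ 20 * ff (i + (q+2)*k) k := by
    have front : 9*(q+3)^3 * ff i 3 ≤ 20 * ff (i + (q+2)*k) 3 := by
      rw [ff_three, ff_three]
      have e1 : (q+2)*(i+1) ≤ (q+2)*k := Nat.mul_le_mul_left _ hi
      have e2 : (q+2)*(3*(i+2)) ≤ (q+2)*(4*k) := Nat.mul_le_mul_left _ (by omega)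
      have e3 : (q+2)*(3*(i+3)) ≤ (q+2)*(5*k) := Nat.mul_le_mul_left _ (by omega)
      have h1 : (q+3) * (i+1) ≤ (i + (q+2)*k + 1) := by nlinarith
      have h2 : 3*(q+3) * (i+2) ≤ 4*(i + (q+2)*k + 2) := by nlinarith
      have h3 : 3*(q+3) * (i+3) ≤ 5*(i + (q+2)*k + 3) := by nlinarith
      calc 9*(q+3)^3 * ((i+1) * ((i+2) * (i+3)))
          = ((q+3)*(i+1)) * ((3*(q+3)*(i+2)) * (3*(q+3)*(i+3))) := by ring
        _ ≤ (i + (q+2)*k + 1) * ((4*(i + (q+2)*k + 2)) * (5*(i + (q+2)*k + 3))) :=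
            Nat.mul_le_mul h1 (Nat.mul_le_mul h2 h3)
        _ = 20 * ((i + (q+2)*k + 1) * ((i + (q+2)*k + 2) * (i + (q+2)*k + 3))) := by ring
    have tail : ff (i+3) (k-3) ≤ ff (i + (q+2)*k + 3) (k-3) := ff_mono _ (by omega)
    calc 9*(q+3)^3 * ff i k = (9*(q+3)^3 * ff i 3) * ff (i+3) (k-3) := by
          rw [ff_split3 i k hk]; ring
      _ ≤ (20 * ff (i + (q+2)*k) 3) * ff (i + (q+2)*k + 3) (k-3) := Nat.mul_le_mul front tail
      _ = 20 * ff (i + (q+2)*k) k := by rw [ff_split3 (i + (q+2)*k) k hk]; ring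
  have hb := numeric1 q
  have key : 80 * (4*(q+4)^3 * ff i k) ≤ 80 * (9*(q+3) * ff (i + (q+2)*k) k) := by
    calc 80 * (4*(q+4)^3 * ff i k) = (320*(q+4)^3) * ff i k := by ring
      _ ≤ (324*(q+3)^4) * ff i k := Nat.mul_le_mul_right _ hb
      _ = (36*(q+3)) * (9*(q+3)^3 * ff i k) := by ring
      _ ≤ (36*(q+3)) * (20 * ff (i + (q+2)*k) k) := Nat.mul_le_mul_left _ ha
      _ = 80 * (9*(q+3) * ff (i + (q+2)*k) k) := by ring
  omega

/-- N2 at original index `q+2`. -/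
lemma n2 (hk : 3 ≤ k) (hi : i + 1 ≤ k) (q : ℕ) :
    4*(q+4)^3 * ff (i+k) k ≤ 9*(q+3) * (ff i k * ff (i + (q+2)*k) k) := by
  have ha : 6*(3*q+11)^3 * ff (i+k) k ≤ 512 * (ff i k * ff (i + (q+2)*k) k) := by
    have front : (3*q+11)^3 * ff (i+k) 3 ≤ 512 * ff (i + (q+2)*k) 3 := by
      rw [ff_three, ff_three]
      have e1 : (q+1)*(3*i+3*1) ≤ (q+1)*(5*k) := Nat.mul_le_mul_left _ (by omega)
      have e2 : (q+1)*(3*i+3*2) ≤ (q+1)*(5*k) := Nat.mul_le_mul_left _ (by omega)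
      have e3 : (q+1)*(3*i+3*3) ≤ (q+1)*(5*k) := Nat.mul_le_mul_left _ (by omega)
      have h1 : (3*q+11) * (i+k+1) ≤ 8*(i + (q+2)*k + 1) := by nlinarith
      have h2 : (3*q+11) * (i+k+2) ≤ 8*(i + (q+2)*k + 2) := by nlinarith
      have h3 : (3*q+11) * (i+k+3) ≤ 8*(i + (q+2)*k + 3) := by nlinarith
      calc (3*q+11)^3 * ((i+k+1) * ((i+k+2) * (i+k+3)))
          = ((3*q+11)*(i+k+1)) * (((3*q+11)*(i+k+2)) * ((3*q+11)*(i+k+3))) := by ring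
        _ ≤ (8*(i + (q+2)*k + 1)) * ((8*(i + (q+2)*k + 2)) * (8*(i + (q+2)*k + 3))) :=
            Nat.mul_le_mul h1 (Nat.mul_le_mul h2 h3)
        _ = 512 * ((i + (q+2)*k + 1) * ((i + (q+2)*k + 2) * (i + (q+2)*k + 3))) := by ring
    have tail : ff (i+k+3) (k-3) ≤ ff (i+3) (k-3) * ff (i + (q+2)*k + 3) (k-3) := by
      apply ff_mul_ff_le
      intro s
      nlinarith [Nat.le_add_left k (q*k + k)]
    have h6 : 6 ≤ ff i 3 := by
      rw [ff_three]
      calc (6:ℕ) = 1 * (2 * 3) := by norm_num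
        _ ≤ (i+1) * ((i+2) * (i+3)) := Nat.mul_le_mul (by omega) (Nat.mul_le_mul (by omega) (by omega))
    calc 6*(3*q+11)^3 * ff (i+k) k
        = ((3*q+11)^3 * ff (i+k) 3) * (6 * ff (i+k+3) (k-3)) := by
          rw [ff_split3 (i+k) k hk]; ring
      _ ≤ (512 * ff (i + (q+2)*k) 3) * (ff i 3 * (ff (i+3) (k-3) * ff (i + (q+2)*k + 3) (k-3))) :=
          Nat.mul_le_mul front (Nat.mul_le_mul h6 tail)
      _ = 512 * ((ff i 3 * ff (i+3) (k-3)) * (ff (i + (q+2)*k) 3 * ff (i + (q+2)*k + 3) (k-3))) := by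
          ring
      _ = 512 * (ff i k * ff (i + (q+2)*k) k) := by
          rw [ff_split3 i k hk, ff_split3 (i + (q+2)*k) k hk]
  have hb := numeric2 q
  have key : (6*(3*q+11)^3) * (4*(q+4)^3 * ff (i+k) k)
      ≤ (6*(3*q+11)^3) * (9*(q+3) * (ff i k * ff (i + (q+2)*k) k)) := by
    calc (6*(3*q+11)^3) * (4*(q+4)^3 * ff (i+k) k)
        = (4*(q+4)^3) * (6*(3*q+11)^3 * ff (i+k) k) := by ring
      _ ≤ (4*(q+4)^3) * (512 * (ff i k * ff (i + (q+2)*k) k)) := Nat.mul_le_mul_left _ ha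
      _ = (2048*(q+4)^3) * (ff i k * ff (i + (q+2)*k) k) := by ring
      _ ≤ (54*(q+3)*(3*q+11)^3) * (ff i k * ff (i + (q+2)*k) k) := Nat.mul_le_mul_right _ hb
      _ = (6*(3*q+11)^3) * (9*(q+3) * (ff i k * ff (i + (q+2)*k) k)) := by ring
  have hpos : 0 < 6*(3*q+11)^3 := by positivity
  exact Nat.le_of_mul_le_mul_left key hpos

end

noncomputable def aa (k i j : ℕ) : ℝ := Real.sqrt ((ff (i + j*k) k : ℝ))⁻¹

noncomputable def bb (k i q : ℕ) : ℝ :=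
  Real.sqrt ((ff (i + (q-1)*k) k : ℝ) / (ff (i + q*k) k : ℝ))

section
variable {k i : ℕ}

lemma ffR_pos (a t : ℕ) : (0:ℝ) < (ff a t : ℝ) := by exact_mod_cast ff_pos a t

lemma aa_pos (j : ℕ) : 0 < aa k i j :=
  Real.sqrt_pos.mpr (inv_pos.mpr (ffR_pos _ _))

lemma aa_nonneg (j : ℕ) : 0 ≤ aa k i j := (aa_pos j).le

lemma ff_gt_one (hk : 3 ≤ k) (a : ℕ) : 1 < ff a k := by
  have h : ff a 3 ≤ ff a k := by
    rw [ff_split3 a k hk]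
    calc ff a 3 = ff a 3 * 1 := by ring
      _ ≤ ff a 3 * ff (a+3) (k-3) := Nat.mul_le_mul_left _ (one_le_ff _ _)
  have : 6 ≤ ff a 3 := by
    rw [ff_three]
    calc (6:ℕ) = 1 * (2 * 3) := by norm_num
      _ ≤ (a+1) * ((a+2) * (a+3)) := Nat.mul_le_mul (by omega) (Nat.mul_le_mul (by omega) (by omega))
  omega

lemma aa_lt_one (hk : 3 ≤ k) (j : ℕ) : aa k i j < 1 := by
  rw [aa, show (1:ℝ) = Real.sqrt 1 by simp]
  apply Real.sqrt_lt_sqrt (inv_nonneg.mpr (ffR_pos (i + j*k) k).le)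
  rw [inv_lt_one_iff₀]
  right
  exact_mod_cast ff_gt_one hk (i + j*k)

lemma bb_pos (q : ℕ) : 0 < bb k i q :=
  Real.sqrt_pos.mpr (div_pos (ffR_pos _ _) (ffR_pos _ _))

lemma bb_nonneg (q : ℕ) : 0 ≤ bb k i q := (bb_pos q).le

lemma aa_eq_stmt (j : ℕ) :
    Real.sqrt (((i + j * k)! : ℝ) / ((i + j * k + k)! : ℝ)) = aa k i j := by
  rw [aa]
  congr 1
  have h : ((i + j*k)! : ℝ) * (ff (i + j*k) k : ℝ) = ((i + j*k + k)! : ℝ) := by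
    exact_mod_cast factorial_mul_ff (i + j*k) k
  rw [← h, div_mul_eq_div_div,
    div_self (by positivity : ((i + j*k)! : ℝ) ≠ 0), one_div]

lemma sqrt_helper (x u v : ℝ) (hx : 0 < x) (hu : 0 < u) (hv : 0 < v) :
    x * u / Real.sqrt (x * (x * u * v)) = Real.sqrt (u / v) := by
  have hsq : Real.sqrt (x * (x * u * v)) = x * (Real.sqrt u * Real.sqrt v) := by
    rw [show x * (x * u * v) = x^2 * (u * v) by ring, Real.sqrt_mul (by positivity),
      Real.sqrt_sq hx.le, Real.sqrt_mul hu.le]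
  rw [hsq, Real.sqrt_div hu.le]
  rw [div_eq_div_iff (by positivity) (Real.sqrt_pos.mpr hv).ne']
  have h1 : u = Real.sqrt u * Real.sqrt u := (Real.mul_self_sqrt hu.le).symm
  calc x * u * Real.sqrt v = x * (Real.sqrt u * Real.sqrt u) * Real.sqrt v := by rw [← h1]
    _ = Real.sqrt u * (x * (Real.sqrt u * Real.sqrt v)) := by ring

lemma bb_eq_stmt (q : ℕ) (hq : 1 ≤ q) :
    ((i + q * k)! : ℝ) / Real.sqrt (((i + q * k - k)! : ℝ) * ((i + q * k + k)! : ℝ))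
      = bb k i q := by
  obtain ⟨q', rfl⟩ : ∃ q', q = q' + 1 := ⟨q - 1, by omega⟩
  have hsub : i + (q' + 1) * k - k = i + q' * k := by
    rw [Nat.succ_mul, ← Nat.add_assoc, Nat.add_sub_cancel]
  have hm : i + (q' + 1) * k = (i + q' * k) + k := by rw [Nat.succ_mul]; ring
  have hq1 : (q' + 1) - 1 = q' := rfl
  rw [bb, hsub, hq1]
  have hmfac : ((i + (q'+1) * k)! : ℝ) = ((i + q' * k) ! : ℝ) * (ff (i + q' * k) k : ℝ) := by
    rw [hm]; exact_mod_cast (factorial_mul_ff (i + q' * k) k).symm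
  have hmkfac : ((i + (q'+1) * k + k)! : ℝ)
      = ((i + q' * k) ! : ℝ) * (ff (i + q' * k) k : ℝ) * (ff (i + (q'+1)*k) k : ℝ) := by
    rw [← hmfac]
    exact_mod_cast (factorial_mul_ff (i + (q'+1)*k) k).symm
  rw [hmfac, hmkfac]
  exact sqrt_helper _ _ _ (by positivity) (ffR_pos _ _) (ffR_pos _ _)

lemma aa_succ (q : ℕ) (hq : 1 ≤ q) : aa k i q = bb k i q * aa k i (q - 1) := by
  rw [aa, aa, bb, ← Real.sqrt_mul (by positivity)]
  congr 1
  have h1 : (ff (i + (q-1)*k) k : ℝ) ≠ 0 := (ffR_pos _ _).ne'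
  have h2 : (ff (i + q*k) k : ℝ) ≠ 0 := (ffR_pos _ _).ne'
  field_simp

end

section
variable {k i : ℕ}

lemma bb_mono (q : ℕ) (hq : 1 ≤ q) : bb k i q ≤ bb k i (q+1) := by
  obtain ⟨q', rfl⟩ : ∃ q', q = q' + 1 := ⟨q - 1, by omega⟩
  rw [bb, bb]
  have h1 : (q' + 1) - 1 = q' := rfl
  have h2 : (q' + 1 + 1) - 1 = q' + 1 := rfl
  rw [h1, h2]
  apply Real.sqrt_le_sqrt
  rw [div_le_div_iff₀ (ffR_pos _ _) (ffR_pos _ _)]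
  have key : ff (i + q'*k) k * ff (i + (q'+2)*k) k
      ≤ ff (i + (q'+1)*k) k * ff (i + (q'+1)*k) k := by
    have h3 : i + (q'+2)*k = (i + q'*k) + 2*k := by ring
    have h4 : i + (q'+1)*k = (i + q'*k) + k := by ring
    rw [h3, h4]
    exact ff_log_concave (i + q'*k) k k
  have key' : (ff (i + q'*k) k : ℝ) * ff (i + (q'+2)*k) k
      ≤ (ff (i + (q'+1)*k) k : ℝ) * ff (i + (q'+1)*k) k := by exact_mod_cast key
  calc (ff (i + q'*k) k : ℝ) * ff (i + (q'+1+1)*k) k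
      = (ff (i + q'*k) k : ℝ) * ff (i + (q'+2)*k) k := by norm_num
    _ ≤ (ff (i + (q'+1)*k) k : ℝ) * ff (i + (q'+1)*k) k := key'

lemma bb_one_le (q : ℕ) (hq : 1 ≤ q) : bb k i 1 ≤ bb k i q := by
  induction q with
  | zero => omega
  | succ q ih =>
      rcases Nat.eq_or_lt_of_le hq with h | h
      · rw [← h]
      · have hq1 : 1 ≤ q := by omega
        exact (ih hq1).trans (bb_mono q hq1)

set_option maxHeartbeats 1000000 in
/-- Key quantitative bound on `1 - bb`. -/
lemma bb_bound (hk : 3 ≤ k) (hi : i + 1 ≤ k) (q : ℕ) (hq : 1 ≤ q) :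
    bb k i q ≤ 1 ∧ 9*((q:ℝ)+1) ≤ 4*((q:ℝ)+2)^3*(1 - bb k i q)^2 := by
  obtain ⟨q', rfl⟩ : ∃ q', q = q' + 1 := ⟨q - 1, by omega⟩
  have h1 : (q' + 1) - 1 = q' := rfl
  set N := ff (i + q'*k) k with hN
  set M := ff (i + (q'+1)*k) k with hM
  have hMeq : i + (q'+1)*k = i + q'*k + k := by ring
  have hnat : (q'+3)^3 * N ≤ (q'+2)^3 * M := by
    rw [hN, hM, hMeq]; exact n3 hk hi q'
  have hcast : ((q':ℝ)+3)^3 * N ≤ ((q':ℝ)+2)^3 * M := by exact_mod_cast hnat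
  have hNpos : (0:ℝ) < N := ffR_pos _ _
  have hMpos : (0:ℝ) < M := ffR_pos _ _
  set s := Real.sqrt (((q':ℝ)+2)/((q':ℝ)+3)) with hs
  have hs0 : 0 ≤ s := Real.sqrt_nonneg _
  have hs2 : s^2 = ((q':ℝ)+2)/((q':ℝ)+3) := Real.sq_sqrt (by positivity)
  have hs2' : s^2 * ((q':ℝ)+3) = (q':ℝ)+2 := by rw [hs2]; field_simp
  have hs1 : s ≤ 1 := by
    rw [hs]
    rw [show (1:ℝ) = Real.sqrt 1 by simp]
    apply Real.sqrt_le_sqrt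
    rw [div_le_one (by positivity)]
    linarith
  have hbbs : bb k i (q'+1) ≤ s^3 := by
    rw [bb, h1, ← hN, ← hM]
    have hc3 : (((q':ℝ)+2)/((q':ℝ)+3))^3 = (s^3)^2 := by rw [← hs2]; ring
    have hdiv : (N:ℝ)/M ≤ (((q':ℝ)+2)/((q':ℝ)+3))^3 := by
      rw [div_pow, div_le_div_iff₀ hMpos (by positivity)]
      nlinarith [hcast]
    calc Real.sqrt ((N:ℝ)/M) ≤ Real.sqrt ((((q':ℝ)+2)/((q':ℝ)+3))^3) := Real.sqrt_le_sqrt hdiv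
      _ = Real.sqrt ((s^3)^2) := by rw [hc3]
      _ = s^3 := Real.sqrt_sq (by positivity)
  have hs3le1 : s^3 ≤ 1 := pow_le_one₀ hs0 hs1
  have hbb1 : bb k i (q'+1) ≤ 1 := hbbs.trans hs3le1
  refine ⟨hbb1, ?_⟩
  have hA : (3/2)*s*(1-s^2) ≤ 1 - s^3 := by nlinarith [sq_nonneg (1-s)]
  have hB : (1-s^2)*((q':ℝ)+3) = 1 := by nlinarith [hs2']
  have h14 : (3/2)*s ≤ (1 - s^3) * ((q':ℝ)+3) := by
    calc (3/2)*s = ((3/2)*s*(1-s^2)) * ((q':ℝ)+3) := by rw [mul_assoc, hB]; ring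
      _ ≤ (1 - s^3) * ((q':ℝ)+3) := mul_le_mul_of_nonneg_right hA (by positivity)
  have hsq14 : ((3/2)*s)^2 ≤ ((1 - s^3) * ((q':ℝ)+3))^2 := by
    apply pow_le_pow_left₀ (by positivity) h14
  have h21 : (1-s^3)^2 ≤ (1 - bb k i (q'+1))^2 := by
    have hb0 := bb_nonneg (k := k) (i := i) (q'+1)
    nlinarith [hbbs]
  push_cast
  calc 9*(((q':ℝ)+1)+1) = 9*(s^2*((q':ℝ)+3)) := by rw [hs2']; ring
    _ = 4*((q':ℝ)+3) * ((9/4) * s^2) := by ring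
    _ ≤ 4*((q':ℝ)+3) * ((1-s^3)^2 * ((q':ℝ)+3)^2) := by
        apply mul_le_mul_of_nonneg_left _ (by positivity)
        nlinarith [hsq14]
    _ = 4*((q':ℝ)+3)^3 * (1-s^3)^2 := by ring
    _ ≤ 4*((q':ℝ)+3)^3 * (1 - bb k i (q'+1))^2 := by
        apply mul_le_mul_of_nonneg_left h21 (by positivity)
    _ = 4*(((q':ℝ)+1)+2)^3 * (1 - bb k i (q'+1))^2 := by ring


lemma cancel_le {c x y : ℝ} (hc : 0 < c) (h : c * x ≤ c * y) : x ≤ y :=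
  le_of_mul_le_mul_left h hc

lemma crux1 (hk : 3 ≤ k) (hi : i + 1 ≤ k) (q : ℕ) :
    aa k i (q+2) ≤ (1 - bb k i (q+2)) * aa k i 0 := by
  obtain ⟨hb1, hb2'⟩ := bb_bound hk hi (q+2) (by omega)
  set b := bb k i (q+2) with hb
  have hb2 : 9*((q:ℝ)+3) ≤ 4*((q:ℝ)+4)^3*(1 - b)^2 := by
    have : (((q:ℕ)+2 : ℕ) : ℝ) = (q:ℝ)+2 := by push_cast; ring
    rw [this] at hb2'
    calc 9*((q:ℝ)+3) = 9*(((q:ℝ)+2)+1) := by ring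
      _ ≤ 4*(((q:ℝ)+2)+2)^3*(1-b)^2 := hb2'
      _ = 4*((q:ℝ)+4)^3*(1-b)^2 := by ring
  set N := ff (i + 0*k) k with hN
  set M := ff (i + (q+2)*k) k with hM
  have hNpos : (0:ℝ) < N := ffR_pos _ _
  have hMpos : (0:ℝ) < M := ffR_pos _ _
  have hnat : 4*(q+4)^3 * N ≤ 9*(q+3) * M := by
    rw [hN, hM, show i + 0*k = i by ring]; exact n1 hk hi q
  have hcast : 4*((q:ℝ)+4)^3 * N ≤ 9*((q:ℝ)+3) * M := by exact_mod_cast hnat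
  have step : (N:ℝ) ≤ (1-b)^2 * M := by
    apply cancel_le (show (0:ℝ) < 4*((q:ℝ)+4)^3 by positivity)
    calc 4*((q:ℝ)+4)^3 * N ≤ 9*((q:ℝ)+3) * M := hcast
      _ ≤ (4*((q:ℝ)+4)^3*(1 - b)^2) * M := mul_le_mul_of_nonneg_right hb2 hMpos.le
      _ = 4*((q:ℝ)+4)^3 * ((1-b)^2 * M) := by ring
  have key : ((M:ℕ):ℝ)⁻¹ ≤ (1-b)^2 * ((N:ℕ):ℝ)⁻¹ := by
    rw [inv_eq_one_div, inv_eq_one_div, mul_one_div, div_le_div_iff₀ hMpos hNpos]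
    linarith [step]
  calc aa k i (q+2) = Real.sqrt ((M:ℝ))⁻¹ := by rw [aa, hM]
    _ ≤ Real.sqrt ((1-b)^2 * ((N:ℝ))⁻¹) := Real.sqrt_le_sqrt key
    _ = (1-b) * Real.sqrt ((N:ℝ))⁻¹ := by
        rw [Real.sqrt_mul (sq_nonneg _), Real.sqrt_sq (by linarith)]
    _ = (1 - b) * aa k i 0 := by rw [aa, hN]

lemma crux2 (hk : 3 ≤ k) (hi : i + 1 ≤ k) (q : ℕ) :
    aa k i (q+2) ≤ (1 - bb k i (q+2)) * bb k i 1 := by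
  obtain ⟨hb1, hb2'⟩ := bb_bound hk hi (q+2) (by omega)
  set b := bb k i (q+2) with hb
  have hb2 : 9*((q:ℝ)+3) ≤ 4*((q:ℝ)+4)^3*(1 - b)^2 := by
    have : (((q:ℕ)+2 : ℕ) : ℝ) = (q:ℝ)+2 := by push_cast; ring
    rw [this] at hb2'
    calc 9*((q:ℝ)+3) = 9*(((q:ℝ)+2)+1) := by ring
      _ ≤ 4*(((q:ℝ)+2)+2)^3*(1-b)^2 := hb2'
      _ = 4*((q:ℝ)+4)^3*(1-b)^2 := by ring
  set N0 := ff (i + 0*k) k with hN0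
  set N1 := ff (i + 1*k) k with hN1
  set M := ff (i + (q+2)*k) k with hM
  have hN0pos : (0:ℝ) < N0 := ffR_pos _ _
  have hN1pos : (0:ℝ) < N1 := ffR_pos _ _
  have hMpos : (0:ℝ) < M := ffR_pos _ _
  have hnat : 4*(q+4)^3 * N1 ≤ 9*(q+3) * (N0 * M) := by
    rw [hN0, hN1, hM, show i + 0*k = i by ring, show i + 1*k = i + k by ring]
    exact n2 hk hi q
  have hcast : 4*((q:ℝ)+4)^3 * N1 ≤ 9*((q:ℝ)+3) * (N0 * M) := by exact_mod_cast hnat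
  have step : (N1:ℝ) ≤ (1-b)^2 * N0 * M := by
    apply cancel_le (show (0:ℝ) < 4*((q:ℝ)+4)^3 by positivity)
    calc 4*((q:ℝ)+4)^3 * N1 ≤ 9*((q:ℝ)+3) * (N0 * M) := hcast
      _ ≤ (4*((q:ℝ)+4)^3*(1 - b)^2) * (N0 * M) :=
          mul_le_mul_of_nonneg_right hb2 (by positivity)
      _ = 4*((q:ℝ)+4)^3 * ((1-b)^2 * N0 * M) := by ring
  have key : ((M:ℕ):ℝ)⁻¹ ≤ (1-b)^2 * ((N0:ℝ) / (N1:ℝ)) := by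
    rw [inv_eq_one_div, mul_div_assoc', div_le_div_iff₀ hMpos hN1pos]
    calc (1:ℝ) * N1 = N1 := by ring
      _ ≤ (1-b)^2 * N0 * M := step
      _ = (1-b)^2 * (N0:ℝ) * M := by ring
  calc aa k i (q+2) = Real.sqrt ((M:ℝ))⁻¹ := by rw [aa, hM]
    _ ≤ Real.sqrt ((1-b)^2 * ((N0:ℝ)/(N1:ℝ))) := Real.sqrt_le_sqrt key
    _ = (1-b) * Real.sqrt ((N0:ℝ)/(N1:ℝ)) := by
        rw [Real.sqrt_mul (sq_nonneg _), Real.sqrt_sq (by linarith)]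
    _ = (1 - b) * bb k i 1 := by rw [bb, hN0, hN1]

lemma base_lt (hk : 3 ≤ k) (hi : i + 1 ≤ k) : bb k i 1 + aa k i 1 < 1 := by
  obtain ⟨hb1, hb2⟩ := bb_bound hk hi 1 le_rfl
  have hb2' : (6:ℝ) ≤ 36*(1 - bb k i 1)^2 := by norm_num at hb2 ⊢; linarith
  have hff : (120:ℕ) ≤ ff (i + 1*k) k := by
    have h1 : ff (i+1*k) 3 ≤ ff (i+1*k) k := by
      rw [ff_split3 (i+1*k) k hk]
      calc ff (i+1*k) 3 = ff (i+1*k) 3 * 1 := by ring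
        _ ≤ ff (i+1*k) 3 * ff (i+1*k+3) (k-3) := Nat.mul_le_mul_left _ (one_le_ff _ _)
    have h2 : ff 3 3 ≤ ff (i+1*k) 3 := ff_mono 3 (by omega)
    have h3 : ff 3 3 = 120 := by rw [ff_three]
    omega
  have ha2 : (aa k i 1)^2 = ((ff (i + 1*k) k : ℝ))⁻¹ :=
    Real.sq_sqrt (inv_nonneg.mpr (ffR_pos _ _).le)
  have ha2' : (aa k i 1)^2 ≤ 1/120 := by
    rw [ha2, inv_eq_one_div]
    apply div_le_div_of_nonneg_left (by norm_num) (by norm_num)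
    exact_mod_cast hff
  have h0 := aa_nonneg (k := k) (i := i) 1
  nlinarith [hb1, h0]

end

end Stmt9Aux

open Stmt9Aux

set_option maxHeartbeats 2000000 in
/-- Proposition: `d_{p+1} - d_{p-1} < α_p α_{p-1} ⋯ α_0 (d_2 - d_0)` for `p ≥ 1`. -/
theorem stmt_9 (k i : ℕ) (hk : 3 ≤ k) (hi : i ≤ k - 1) (d : ℕ → ℝ)
    (hd0 : d 0 = 1)
    (hrec : ∀ p : ℕ, d (p + 1) =
      ((i + p * k)! : ℝ) /
          Real.sqrt (((i + p * k - k)! : ℝ) * ((i + p * k + k)! : ℝ)) *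
          (if p = 0 then 0 else d (p - 1))
        + Real.sqrt (((i + p * k)! : ℝ) / ((i + p * k + k)! : ℝ)) * d p) :
    ∀ p : ℕ, 1 ≤ p →
      d (p + 1) - d (p - 1) <
        (∏ j ∈ Finset.range (p + 1),
            Real.sqrt (((i + j * k)! : ℝ) / ((i + j * k + k)! : ℝ))) *
          (d 2 - d 0) := by
  have hik : i + 1 ≤ k := by omega
  -- basic conversions
  have hd1 : d 1 = aa k i 0 := by
    have h := hrec 0
    rw [if_pos rfl, mul_zero, hd0, mul_one, aa_eq_stmt] at h
    rw [h, zero_add]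
  have hrec' : ∀ p : ℕ, 1 ≤ p → d (p+1) = bb k i p * d (p-1) + aa k i p * d p := by
    intro p hp
    have h := hrec p
    rw [if_neg (by omega), aa_eq_stmt, bb_eq_stmt p hp] at h
    exact h
  -- positivity of d
  have hdpos : ∀ p, 0 < d p := by
    intro p
    induction p using Nat.strong_induction_on with
    | _ p IH =>
      match p, IH with
      | 0, _ => rw [hd0]; norm_num
      | 1, _ => rw [hd1]; exact aa_pos 0
      | (s+2), IH =>
        have e : s + 1 - 1 = s := rfl
        rw [hrec' (s+1) (by omega), e]
        have h1 := IH s (by omega)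
        have h2 := IH (s+1) (by omega)
        have := bb_pos (k := k) (i := i) (s+1)
        have := aa_pos (k := k) (i := i) (s+1)
        nlinarith
  -- the uniform ratio lower bound
  set lam : ℝ := min (aa k i 0) (bb k i 1) with hlam
  have hlam_pos : 0 < lam := lt_min (aa_pos 0) (bb_pos 1)
  have hlam_a0 : lam ≤ aa k i 0 := min_le_left _ _
  have hlam_b1 : lam ≤ bb k i 1 := min_le_right _ _
  have ha0lt1 : aa k i 0 < 1 := aa_lt_one hk 0
  have lemR : ∀ q, 1 ≤ q → lam * d (q-1) ≤ d q := by
    intro q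
    induction q using Nat.strong_induction_on with
    | _ q IH =>
      match q, IH with
      | 0, _ => exact fun h => absurd h (by omega)
      | 1, _ =>
        intro _
        show lam * d 0 ≤ d 1
        rw [hd0, hd1, mul_one]
        exact hlam_a0
      | 2, _ =>
        intro _
        show lam * d 1 ≤ d 2
        have h2 : d 2 = bb k i 1 * d 0 + aa k i 1 * d 1 := hrec' 1 le_rfl
        have hd1le : d 1 ≤ d 0 := by
          rw [hd0, hd1]; exact ha0lt1.le
        have hb1 := bb_pos (k := k) (i := i) 1
        have ha1 := aa_pos (k := k) (i := i) 1
        have hd1pos := hdpos 1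
        nlinarith [mul_le_mul_of_nonneg_left hd1le hb1.le,
          mul_le_mul_of_nonneg_right hlam_b1 hd1pos.le]
      | (r+3), IH =>
        intro _
        show lam * d (r+2) ≤ d (r+3)
        have dq_eq : d (r+3) = bb k i (r+2) * d (r+1) + aa k i (r+2) * d (r+2) :=
          hrec' (r+2) (by omega)
        have dq1_eq : d (r+2) = bb k i (r+1) * d r + aa k i (r+1) * d (r+1) :=
          hrec' (r+1) (by omega)
        have ihr : lam * d r ≤ d (r+1) := IH (r+1) (by omega) (by omega)
        have hab : aa k i (r+2) = bb k i (r+2) * aa k i (r+1) := aa_succ (r+2) (by omega)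
        have hmono : bb k i (r+1) ≤ bb k i (r+2) := bb_mono (r+1) (by omega)
        have hl2 : lam ≤ bb k i (r+1) := hlam_b1.trans (bb_one_le (r+1) (by omega))
        have hl3 : lam ≤ bb k i (r+2) := hlam_b1.trans (bb_one_le (r+2) (by omega))
        have hb2 := bb_pos (k := k) (i := i) (r+1)
        have hb3 := bb_pos (k := k) (i := i) (r+2)
        have ha2 := aa_pos (k := k) (i := i) (r+1)
        have ha3 := aa_pos (k := k) (i := i) (r+2)
        have hdr := hdpos r
        have hdr1 := hdpos (r+1)
        have hdr2 := hdpos (r+2)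
        rcases le_or_gt lam (aa k i (r+2)) with hc | hc
        · nlinarith [mul_le_mul_of_nonneg_right hc hdr2.le]
        · -- (lam - a3) * d(r+2) ≤ b3 * d(r+1)
          have hsq : lam * lam ≤ bb k i (r+1) * bb k i (r+2) :=
            mul_le_mul hl2 hl3 hlam_pos.le hb2.le
          have key : (lam - aa k i (r+2)) * (bb k i (r+1) + lam * aa k i (r+1))
              ≤ lam * bb k i (r+2) := by
            nlinarith [mul_le_mul_of_nonneg_right hsq ha2.le,
              mul_nonneg (mul_nonneg hlam_pos.le hb3.le) (sq_nonneg (aa k i (r+1))),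
              mul_le_mul_of_nonneg_left hmono hlam_pos.le,
              mul_nonneg (mul_nonneg ha3.le (aa_nonneg (k:=k) (i:=i) (r+1))) hlam_pos.le]
          have step1 : lam * d (r+2) ≤ (bb k i (r+1) + lam * aa k i (r+1)) * d (r+1) := by
            have h1 : bb k i (r+1) * (lam * d r) ≤ bb k i (r+1) * d (r+1) :=
              mul_le_mul_of_nonneg_left ihr hb2.le
            rw [dq1_eq]
            nlinarith
          have step2 : (lam - aa k i (r+2)) * (lam * d (r+2))
              ≤ lam * (bb k i (r+2) * d (r+1)) := by
            calc (lam - aa k i (r+2)) * (lam * d (r+2))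
                ≤ (lam - aa k i (r+2)) * ((bb k i (r+1) + lam * aa k i (r+1)) * d (r+1)) :=
                  mul_le_mul_of_nonneg_left step1 (by linarith)
              _ = ((lam - aa k i (r+2)) * (bb k i (r+1) + lam * aa k i (r+1))) * d (r+1) := by
                  ring
              _ ≤ (lam * bb k i (r+2))  * d (r+1) :=
                  mul_le_mul_of_nonneg_right key hdr1.le
              _ = lam * (bb k i (r+2) * d (r+1)) := by ring
          have step3 : (lam - aa k i (r+2)) * d (r+2) ≤ bb k i (r+2) * d (r+1) := by
            have := mul_le_mul_of_nonneg_left step2 (inv_pos.mpr hlam_pos).le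
            have hlne : lam ≠ 0 := hlam_pos.ne'
            calc (lam - aa k i (r+2)) * d (r+2)
                = lam⁻¹ * ((lam - aa k i (r+2)) * (lam * d (r+2))) := by
                  field_simp
              _ ≤ lam⁻¹ * (lam * (bb k i (r+2) * d (r+1))) :=
                  mul_le_mul_of_nonneg_left step2 (inv_pos.mpr hlam_pos).le
              _ = bb k i (r+2) * d (r+1) := by field_simp
          rw [dq_eq]
          nlinarith
  -- crux: aa q ≤ (1 - bb q) * lam  for q ≥ 2
  have crux : ∀ q : ℕ, aa k i (q+2) ≤ (1 - bb k i (q+2)) * lam := by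
    intro q
    have hbb1 : bb k i (q+2) ≤ 1 := (bb_bound hk hik (q+2) (by omega)).1
    rcases le_total (aa k i 0) (bb k i 1) with h | h
    · rw [hlam, min_eq_left h]
      exact crux1 hk hik q
    · rw [hlam, min_eq_right h]
      exact crux2 hk hik q
  -- E < 0
  have hd2 : d 2 = bb k i 1 + aa k i 1 * aa k i 0 := by
    have h2 : d 2 = bb k i 1 * d 0 + aa k i 1 * d 1 := hrec' 1 le_rfl
    rw [h2, hd0, hd1, mul_one]
  have hE : d 2 - d 0 < 0 := by
    have hb := base_lt hk hik
    have ha1 := aa_pos (k := k) (i := i) 1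
    rw [hd2, hd0]
    nlinarith
  -- product conversion
  have hprod : ∀ n : ℕ, (∏ j ∈ Finset.range n,
      Real.sqrt (((i + j * k)! : ℝ) / ((i + j * k + k)! : ℝ))) = ∏ j ∈ Finset.range n, aa k i j := by
    intro n
    exact Finset.prod_congr rfl (fun j _ => aa_eq_stmt j)
  have hprodpos : ∀ n : ℕ, 0 < ∏ j ∈ Finset.range n, aa k i j := by
    intro n
    exact Finset.prod_pos (fun j _ => aa_pos j)
  -- main induction
  intro p hp
  induction p, hp using Nat.le_induction with
  | base =>
      rw [hprod]
      show d 2 - d 0 < (∏ j ∈ Finset.range 2, aa k i j) * (d 2 - d 0)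
      have h2 : (∏ j ∈ Finset.range 2, aa k i j) = aa k i 0 * aa k i 1 := by
        rw [Finset.prod_range_succ, Finset.prod_range_one]
      rw [h2]
      have h0 := aa_pos (k := k) (i := i) 0
      have h1 := aa_pos (k := k) (i := i) 1
      have h0' := aa_lt_one (k := k) (i := i) hk 0
      have h1' := aa_lt_one (k := k) (i := i) hk 1
      nlinarith
  | succ p hp IH =>
      rw [hprod] at IH ⊢
      show d (p+2) - d (p+1-1) < (∏ j ∈ Finset.range (p+2), aa k i j) * (d 2 - d 0)
      have e1 : p + 1 - 1 = p := rfl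
      rw [e1]
      have heq : d (p+2) = bb k i (p+1) * d p + aa k i (p+1) * d (p+1) := by
        have := hrec' (p+1) (by omega)
        rwa [e1] at this
      have key1 : aa k i (p+1) * (d (p+1) - d (p-1))
          < aa k i (p+1) * ((∏ j ∈ Finset.range (p+1), aa k i j) * (d 2 - d 0)) :=
        mul_lt_mul_of_pos_left IH (aa_pos (p+1))
      have key2 : aa k i (p+1) * d (p-1) ≤ (1 - bb k i (p+1)) * d p := by
        obtain ⟨p', rfl⟩ : ∃ p', p = p' + 1 := ⟨p - 1, by omega⟩
        have hcx : aa k i (p'+2) ≤ (1 - bb k i (p'+2)) * lam := crux p'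
        have hrp : lam * d p' ≤ d (p'+1) := lemR (p'+1) (by omega)
        have hbb1 : bb k i (p'+2) ≤ 1 := (bb_bound hk hik (p'+2) (by omega)).1
        have hdp' := hdpos p'
        have e2 : p' + 1 - 1 = p' := rfl
        rw [e2]
        calc aa k i (p'+2) * d p' ≤ ((1 - bb k i (p'+2)) * lam) * d p' :=
              mul_le_mul_of_nonneg_right hcx hdp'.le
          _ = (1 - bb k i (p'+2)) * (lam * d p') := by ring
          _ ≤ (1 - bb k i (p'+2)) * d (p'+1) :=
              mul_le_mul_of_nonneg_left hrp (by linarith)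
      have hsplit : ∏ j ∈ Finset.range (p+2), aa k i j
          = (∏ j ∈ Finset.range (p+1), aa k i j) * aa k i (p+1) :=
        Finset.prod_range_succ _ _
      rw [hsplit, heq]
      linarith [key1, key2]
end

section
/- Fix k ≥ 3 and 0 ≤ i ≤ k-1, and let (d_p) be the positive solution of the recurrence d_{p+1} = ((i+pk)!/√((i+pk-k)!·(i+pk+k)!))·d_{p-1} + √((i+pk)!/(i+pk+k)!)·d_p with d_{-1}=0, d_0=1. Then the sequence (d_p) converges. -/
/-!
Writing `n = i + p k`, the two coefficients of the recurrence satisfy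
`n! / √((n-k)! (n+k)!) + √(n! / (n+k)!) ≤ 1 - 1/(n+1)`: the first by log-convexity of the
factorial, the second because `n! / (n+k)! ≤ (n+1)^(-3)`. Hence `M_p = max (d_p, d_{p+1})`
is non-increasing and shrinks by a factor `1 - 1/(k (p+2))` every two steps; as the harmonic
series diverges, `M_p → 0`, and so `d_p → 0`.
-/

open Nat Filter Topology Finset

lemma Nat.factorial_succ_mul_factorial_le_of_add_eq {m l n : ℕ} (h : m + l = 2 * n + 1) :
    (n + 1)! * n ! ≤ m ! * l ! := by
  have hmid : (2 * n + 1).choose m ≤ (2 * n + 1).choose n := by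
    simpa [show (2 * n + 1) / 2 = n by omega] using Nat.choose_le_middle m (2 * n + 1)
  have hpos : 0 < (2 * n + 1).choose n := Nat.choose_pos (by omega)
  have hcentral := Nat.add_choose_mul_factorial_mul_factorial (n + 1) n
  have hside := Nat.add_choose_mul_factorial_mul_factorial l m
  rw [show n + 1 + n = 2 * n + 1 by omega] at hcentral
  rw [add_comm, h] at hside
  refine Nat.le_of_mul_le_mul_left ?_ hpos
  calc (2 * n + 1).choose n * ((n + 1)! * n !) = (2 * n + 1)! := by rw [← hcentral]; ring
    _ = (2 * n + 1).choose m * m ! * l ! := by rw [← hside]; ring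
    _ ≤ (2 * n + 1).choose n * m ! * l ! := by gcongr
    _ = (2 * n + 1).choose n * (m ! * l !) := by ring

lemma sq_factorial_div_factorial_sub_mul_factorial_add_le {k n : ℕ} (hkn : k ≤ n) :
    (n ! : ℝ) ^ 2 / ((n - k)! * (n + k)!) ≤ 1 - k / (n + 1) := by
  have hnat : (n + 1)! * n ! ≤ (n - k + 1)! * (n + k)! :=
    Nat.factorial_succ_mul_factorial_le_of_add_eq (by omega)
  rw [Nat.factorial_succ, Nat.factorial_succ] at hnat
  have hreal : ((n : ℝ) + 1) * (n ! : ℝ) ^ 2 ≤ (n - k + 1 : ℝ) * ((n - k)! * (n + k)!) := by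
    have := (Nat.cast_le (α := ℝ)).mpr hnat
    push_cast [hkn] at this
    linarith
  rw [div_le_iff₀ (by positivity), one_sub_div (by positivity), div_mul_eq_mul_div,
    le_div_iff₀ (by positivity)]
  linarith

lemma factorial_div_factorial_add_le (n k : ℕ) : (n ! : ℝ) / (n + k)! ≤ 1 / (n + 1) ^ k := by
  rw [div_le_div_iff₀ (by positivity) (by positivity), one_mul]
  exact_mod_cast Nat.factorial_mul_pow_le_factorial

lemma factorial_div_sqrt_add_sqrt_factorial_div_le {k n : ℕ} (hk : 3 ≤ k) (hkn : k ≤ n) :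
    (n ! : ℝ) / √((n - k)! * (n + k)!) + √((n ! : ℝ) / (n + k)!) ≤ 1 - 1 / (n + 1) := by
  set c : ℝ := 1 / (n + 1) with hc
  have hn : (3 : ℝ) ≤ n := by exact_mod_cast hk.trans hkn
  have hc0 : 0 < c := by positivity
  have hc4 : c ≤ 1 / 4 := by rw [hc]; gcongr; linarith
  have hcn : c * (n + 1) = 1 := by rw [hc]; field_simp
  have hfirst : (n ! : ℝ) / √((n - k)! * (n + k)!) ≤ 1 - 3 / 2 * c := by
    rw [← Real.sqrt_sq (by positivity : (0 : ℝ) ≤ n !), ← Real.sqrt_div' _ (by positivity)]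
    refine Real.sqrt_le_iff.mpr ⟨by linarith, ?_⟩
    have hsq := sq_factorial_div_factorial_sub_mul_factorial_add_le hkn
    have hk' : (3 : ℝ) * c ≤ k * c := by gcongr; exact_mod_cast hk
    rw [div_eq_mul_one_div (k : ℝ), ← hc] at hsq
    nlinarith
  have hsecond : √((n ! : ℝ) / (n + k)!) ≤ c / 2 := by
    refine Real.sqrt_le_iff.mpr ⟨by positivity, ?_⟩
    calc (n ! : ℝ) / (n + k)! ≤ 1 / (n + 1) ^ k := factorial_div_factorial_add_le n k
      _ ≤ 1 / (n + 1) ^ 3 := by gcongr; linarith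
      _ = c ^ 3 := by rw [hc, one_div_pow]
      _ ≤ (c / 2) ^ 2 := by nlinarith
  linarith

lemma tendsto_zero_of_le_one_sub_mul_two_step {u ε : ℕ → ℝ} (hu : Antitone u)
    (hu0 : ∀ n, 0 ≤ u n) (hε0 : ∀ n, 0 ≤ ε n) (hε : ¬Summable ε)
    (hstep : ∀ n, u (n + 2) ≤ (1 - ε n) * u n) : Tendsto u atTop (𝓝 0) := by
  have hbdd : BddBelow (Set.range u) := ⟨0, Set.forall_mem_range.mpr hu0⟩
  have hlim := tendsto_atTop_ciInf hu hbdd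
  set L := ⨅ n, u n
  have hL0 : 0 ≤ L := le_ciInf hu0
  obtain hL | hL := hL0.eq_or_lt
  · rwa [← hL] at hlim
  refine absurd ?_ hε
  -- `L ε n ≤ u n - u (n + 2)` bounds the partial sums of `ε` by a telescoping sum
  refine summable_of_sum_range_le hε0 (c := (u 0 + u 1) / L) fun N => ?_
  have hterm : ∀ n, L * ε n ≤ (u n + u (n + 1)) - (u (n + 1) + u (n + 1 + 1)) := fun n => by
    have := mul_le_mul_of_nonneg_left (ciInf_le hbdd n : L ≤ u n) (hε0 n)
    linarith [hstep n]
  rw [le_div_iff₀ hL, mul_comm, mul_sum]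
  calc ∑ n ∈ range N, L * ε n
      ≤ ∑ n ∈ range N, ((u n + u (n + 1)) - (u (n + 1) + u (n + 1 + 1))) :=
        sum_le_sum fun n _ => hterm n
    _ = (u 0 + u 1) - (u N + u (N + 1)) := sum_range_sub' (fun n => u n + u (n + 1)) N
    _ ≤ u 0 + u 1 := by linarith [hu0 N, hu0 (N + 1)]

lemma tendsto_zero_of_le_one_sub_mul_max {d ε : ℕ → ℝ} (hd : ∀ n, 0 ≤ d n)
    (hε0 : ∀ n, 0 ≤ ε n) (hε1 : ∀ n, ε n ≤ 1) (hε_anti : Antitone ε) (hε : ¬Summable ε)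
    (hstep : ∀ n, d (n + 2) ≤ (1 - ε n) * max (d n) (d (n + 1))) :
    Tendsto d atTop (𝓝 0) := by
  set M : ℕ → ℝ := fun n => max (d n) (d (n + 1))
  have hM0 : ∀ n, 0 ≤ M n := fun n => (hd n).trans (le_max_left _ _)
  have hM_succ : ∀ n, M (n + 1) ≤ M n := fun n =>
    max_le (le_max_right _ _) ((hstep n).trans (by nlinarith [hε0 n, hM0 n]))
  have hM_two : ∀ n, M (n + 2) ≤ (1 - ε (n + 1)) * M n := fun n => by
    have h1 : 0 ≤ 1 - ε (n + 1) := by linarith [hε1 (n + 1)]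
    have h2 : ε (n + 1) ≤ ε n := hε_anti n.le_succ
    refine max_le ((hstep n).trans (by nlinarith [hM0 n])) ((hstep (n + 1)).trans ?_)
    exact mul_le_mul_of_nonneg_left (hM_succ n) h1
  have hM : Tendsto M atTop (𝓝 0) :=
    tendsto_zero_of_le_one_sub_mul_two_step (antitone_nat_of_succ_le hM_succ) hM0
      (fun n => hε0 (n + 1)) ((summable_nat_add_iff 1).not.mpr hε) hM_two
  exact squeeze_zero hd (fun n => le_max_left _ _) hM

lemma not_summable_one_div_mul_add_two {k : ℕ} (hk : k ≠ 0) :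
    ¬Summable fun n : ℕ => 1 / ((k : ℝ) * (n + 2)) := by
  have hfun : (fun n : ℕ => 1 / ((k : ℝ) * (n + 2))) =
      fun n => (k : ℝ)⁻¹ * (1 / ((n + 2 : ℕ) : ℝ)) := by
    ext n; push_cast; field_simp
  rw [hfun, summable_mul_left_iff (by positivity),
    summable_nat_add_iff 2 (f := fun n => 1 / (n : ℝ))]
  exact Real.not_summable_one_div_natCast

lemma mul_add_mul_le_add_mul_max {a b x y : ℝ} (ha : 0 ≤ a) (hb : 0 ≤ b) :
    a * x + b * y ≤ (a + b) * max x y := by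
  nlinarith [mul_le_mul_of_nonneg_left (le_max_left x y) ha,
    mul_le_mul_of_nonneg_left (le_max_right x y) hb]

/-- The sequence `(d_p)` is convergent. -/
theorem stmt_10 (k i : ℕ) (hk : 3 ≤ k) (hi : i ≤ k - 1) (d : ℕ → ℝ)
    (hd0 : d 0 = 1)
    (hrec : ∀ p : ℕ, d (p + 1) =
      ((i + p * k)! : ℝ) /
          Real.sqrt (((i + p * k - k)! : ℝ) * ((i + p * k + k)! : ℝ)) *
          (if p = 0 then 0 else d (p - 1))
        + Real.sqrt (((i + p * k)! : ℝ) / ((i + p * k + k)! : ℝ)) * d p) :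
    ∃ L : ℝ, Filter.Tendsto d Filter.atTop (nhds L) := by
  have hd : ∀ p, 0 ≤ d p := by
    intro p
    induction p using Nat.strong_induction_on with
    | _ p ih =>
      rcases p with _ | p
      · simp [hd0]
      · have hprev : 0 ≤ if p = 0 then 0 else d (p - 1) := by
          split_ifs
          exacts [le_rfl, ih _ (by omega)]
        have := ih p (by omega)
        rw [hrec p]
        positivity
  have hstep : ∀ p, d (p + 2) ≤ (1 - 1 / ((k : ℝ) * (p + 2))) * max (d p) (d (p + 1)) := by
    intro p
    set n := i + (p + 1) * k
    have hn : (n : ℝ) + 1 ≤ k * (p + 2) := by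
      have : n + 1 ≤ k * (p + 2) := by simp only [n]; nlinarith [(by omega : i + 1 ≤ k)]
      exact_mod_cast this
    have hmax : 0 ≤ max (d p) (d (p + 1)) := (hd p).trans (le_max_left _ _)
    rw [hrec (p + 1), if_neg p.succ_ne_zero, Nat.add_sub_cancel]
    calc _ ≤ _ * max (d p) (d (p + 1)) :=
          mul_add_mul_le_add_mul_max (by positivity) (by positivity)
      _ ≤ (1 - 1 / ((n : ℝ) + 1)) * max (d p) (d (p + 1)) := by
          gcongr
          exact factorial_div_sqrt_add_sqrt_factorial_div_le hk (by nlinarith)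
      _ ≤ _ := by gcongr
  have hk1 : (1 : ℝ) ≤ k := by exact_mod_cast (by omega : 1 ≤ k)
  refine ⟨0, tendsto_zero_of_le_one_sub_mul_max hd (fun p => by positivity)
    (fun p => div_le_one_of_le₀ (by nlinarith) (by positivity))
    (fun p q hpq => by gcongr) (not_summable_one_div_mul_add_two (by omega)) hstep⟩
end

section
/- Fix k ≥ 3 and 0 ≤ i ≤ k-1, and let (d_p) be the positive solution of the recurrence d_{p+1} = ((i+pk)!/√((i+pk-k)!·(i+pk+k)!))·d_{p-1} + √((i+pk)!/(i+pk+k)!)·d_p with d_{-1}=0, d_0=1. Then ∑_{p=0}^∞ d_p² < ∞. -/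
/-!
Put `c = i + q k`. The recurrence reads `d (q + 2) = α(c) d q + β(c) d (q + 1)`, where
`α(c)² = ∏_{j<k} (c + 1 + j) / (c + k + 1 + j) ≤ ((c + k) / (c + 2k))³` and `β(c)² ≤ c⁻³`.
For `c ≥ 10 k` this gives `α(c) + β(c) ≤ (1 + 5k / 4c)⁻¹`, and by Bernoulli's inequality
`w q = (i + q k) ^ (-5/8)` is then a supersolution of the recurrence. Hence `|d q| ≤ C w q`,
and `w q ^ 2 ≍ q ^ (-5/4)` is summable.
-/

open Nat

theorem exists_abs_le_mul_of_recurrence {a b x w : ℕ → ℝ} (ha : ∀ q, 0 ≤ a q)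
    (hb : ∀ q, 0 ≤ b q) (hw : ∀ q, 0 < w q)
    (hx : ∀ q, x (q + 2) = a q * x q + b q * x (q + 1))
    (hsup : ∀ q, a q * w q + b q * w (q + 1) ≤ w (q + 2)) :
    ∃ C, ∀ q, |x q| ≤ C * w q := by
  set C := max (|x 0| / w 0) (|x 1| / w 1)
  have hC : 0 ≤ C := (div_nonneg (abs_nonneg _) (hw 0).le).trans (le_max_left _ _)
  have hpair : ∀ q, |x q| ≤ C * w q ∧ |x (q + 1)| ≤ C * w (q + 1) := by
    intro q
    induction q with
    | zero =>
      exact ⟨(div_le_iff₀ (hw 0)).mp (le_max_left _ _),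
        (div_le_iff₀ (hw 1)).mp (le_max_right _ _)⟩
    | succ q ih =>
      refine ⟨ih.2, ?_⟩
      calc |x (q + 2)| ≤ a q * |x q| + b q * |x (q + 1)| := by
            rw [hx, ← abs_of_nonneg (ha q), ← abs_of_nonneg (hb q), ← abs_mul, ← abs_mul]
            simpa only [abs_of_nonneg (ha q), abs_of_nonneg (hb q)] using abs_add_le _ _
        _ ≤ a q * (C * w q) + b q * (C * w (q + 1)) := by
            gcongr
            exacts [ha q, ih.1, hb q, ih.2]
        _ = C * (a q * w q + b q * w (q + 1)) := by ring
        _ ≤ C * w (q + 2) := by gcongr; exact hsup q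
  exact ⟨C, fun q => (hpair q).1⟩

theorem summable_sq_of_recurrence {a b x w : ℕ → ℝ} (ha : ∀ q, 0 ≤ a q)
    (hb : ∀ q, 0 ≤ b q) (hw : ∀ q, 0 < w q)
    (hx : ∀ q, x (q + 2) = a q * x q + b q * x (q + 1))
    (hsup : ∀ q, a q * w q + b q * w (q + 1) ≤ w (q + 2))
    (hw2 : Summable fun q => w q ^ 2) :
    Summable fun q => x q ^ 2 := by
  obtain ⟨C, hC⟩ := exists_abs_le_mul_of_recurrence ha hb hw hx hsup
  refine (hw2.mul_left (C ^ 2)).of_nonneg_of_le (fun q => sq_nonneg _) fun q => ?_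
  calc x q ^ 2 = |x q| ^ 2 := (sq_abs _).symm
    _ ≤ (C * w q) ^ 2 := pow_le_pow_left₀ (abs_nonneg _) (hC q) 2
    _ = C ^ 2 * w q ^ 2 := by ring

theorem mul_rpow_neg_add_mul_rpow_neg_le {s c h a b : ℝ} (hs0 : 0 ≤ s) (hs1 : s ≤ 1)
    (hc : 0 < c) (hh : 0 ≤ h) (hb : 0 ≤ b)
    (hab : (a + b) * (c + 2 * s * h) ≤ c) :
    a * c ^ (-s) + b * (c + h) ^ (-s) ≤ (c + 2 * h) ^ (-s) := by
  have hmono : (c + h) ^ (-s) ≤ c ^ (-s) :=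
    Real.rpow_le_rpow_of_nonpos hc (by linarith) (by linarith)
  have hhc : 0 ≤ 2 * h / c := by positivity
  have hbern : (1 + 2 * h / c) ^ s ≤ 1 + s * (2 * h / c) :=
    rpow_one_add_le_one_add_mul_self (by linarith) hs0 hs1
  have hsplit : (c + 2 * h) ^ (-s) = c ^ (-s) * ((1 + 2 * h / c) ^ s)⁻¹ := by
    rw [← Real.rpow_neg (by positivity), ← Real.mul_rpow hc.le (by positivity)]
    congr 1
    field_simp
  have hab' : a + b ≤ (1 + s * (2 * h / c))⁻¹ := by
    rw [show 1 + s * (2 * h / c) = (c + 2 * s * h) / c by field_simp, inv_div,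
      le_div_iff₀ (by positivity)]
    exact hab
  calc a * c ^ (-s) + b * (c + h) ^ (-s) ≤ a * c ^ (-s) + b * c ^ (-s) := by gcongr
    _ = c ^ (-s) * (a + b) := by ring
    _ ≤ c ^ (-s) * (1 + s * (2 * h / c))⁻¹ := by gcongr
    _ ≤ (c + 2 * h) ^ (-s) := by rw [hsplit]; gcongr

theorem factorial_sq_mul_pow_le (c k : ℕ) :
    (c + k)! ^ 2 * (c + 2 * k) ^ k ≤ c ! * (c + 2 * k)! * (c + k) ^ k := by
  have hX := factorial_mul_ascFactorial c k
  have hY := factorial_mul_ascFactorial (c + k) k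
  rw [show c + k + k = c + 2 * k by ring] at hY
  have hfactors : (c + 1).ascFactorial k * (c + 2 * k) ^ k ≤
      (c + k + 1).ascFactorial k * (c + k) ^ k := by
    simp only [ascFactorial_eq_prod_range, Finset.pow_eq_prod_const, ← Finset.prod_mul_distrib]
    refine Finset.prod_le_prod' fun j hj => ?_
    have hjk : j + 1 ≤ k := Finset.mem_range.mp hj
    nlinarith
  calc (c + k)! ^ 2 * (c + 2 * k) ^ k
      = c ! * (c + k)! * ((c + 1).ascFactorial k * (c + 2 * k) ^ k) := by rw [← hX]; ring
    _ ≤ c ! * (c + k)! * ((c + k + 1).ascFactorial k * (c + k) ^ k) := by gcongr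
    _ = c ! * (c + 2 * k)! * (c + k) ^ k := by rw [← hY]; ring

theorem factorial_mul_cube_le (c k : ℕ) (hk : 3 ≤ k) : (c + k)! * c ^ 3 ≤ (c + 2 * k)! := by
  calc (c + k)! * c ^ 3 ≤ (c + k)! * (c + k + 1) ^ k :=
        Nat.mul_le_mul_left _
          ((Nat.pow_le_pow_left (by omega) 3).trans (Nat.pow_le_pow_right (by omega) hk))
    _ ≤ (c + 2 * k)! := by
        rw [two_mul, ← add_assoc]; exact factorial_mul_pow_le_factorial

-- The coefficients of `d (p - 1)` and `d p` in the recurrence, at `i + p k = c + k`.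
noncomputable def recAlpha (k c : ℕ) : ℝ :=
  ((c + k)! : ℝ) / Real.sqrt ((c ! : ℝ) * ((c + 2 * k)! : ℝ))

noncomputable def recBeta (k c : ℕ) : ℝ :=
  Real.sqrt (((c + k)! : ℝ) / ((c + 2 * k)! : ℝ))

theorem recAlpha_nonneg (k c : ℕ) : 0 ≤ recAlpha k c := by
  unfold recAlpha; positivity

theorem recBeta_nonneg (k c : ℕ) : 0 ≤ recBeta k c := Real.sqrt_nonneg _

theorem recAlpha_sq_mul_le {k : ℕ} (c : ℕ) (hk : 3 ≤ k) :
    recAlpha k c ^ 2 * ((c : ℝ) + 2 * k) ^ 3 ≤ ((c : ℝ) + k) ^ 3 := by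
  have hpos : (0 : ℝ) < c + 2 * k := by positivity
  set r : ℝ := (c + k) / (c + 2 * k)
  have hr0 : 0 ≤ r := by positivity
  have hr1 : r ≤ 1 := (div_le_one hpos).mpr (by linarith)
  have hsq : recAlpha k c ^ 2 ≤ r ^ k := by
    rw [recAlpha, div_pow, Real.sq_sqrt (by positivity), div_pow,
      div_le_div_iff₀ (by positivity) (by positivity)]
    exact_mod_cast (factorial_sq_mul_pow_le c k).trans_eq (mul_comm _ _)
  calc recAlpha k c ^ 2 * ((c : ℝ) + 2 * k) ^ 3 ≤ r ^ 3 * ((c : ℝ) + 2 * k) ^ 3 := by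
        gcongr; exact hsq.trans (pow_le_pow_of_le_one hr0 hr1 hk)
    _ = ((c : ℝ) + k) ^ 3 := by rw [div_pow, div_mul_cancel₀ _ (by positivity)]

theorem recBeta_sq_mul_le {k : ℕ} (c : ℕ) (hk : 3 ≤ k) :
    recBeta k c ^ 2 * (c : ℝ) ^ 3 ≤ 1 := by
  rw [recBeta, Real.sq_sqrt (by positivity), div_mul_eq_mul_div, div_le_one (by positivity)]
  exact_mod_cast factorial_mul_cube_le c k hk

theorem recAlpha_add_recBeta_le {k c : ℕ} (hk : 3 ≤ k) (hc : 10 * k ≤ c) :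
    (recAlpha k c + recBeta k c) * (c + 2 * (5 / 8) * k) ≤ c := by
  set A := recAlpha k c
  set B := recBeta k c
  have hk' : (3 : ℝ) ≤ k := by exact_mod_cast hk
  have hc' : 10 * (k : ℝ) ≤ c := by exact_mod_cast hc
  have hc0 : (0 : ℝ) < c := by linarith
  have hA : 2 * A * ((c : ℝ) + 2 * k) ^ 2 ≤ ((c : ℝ) + k) * (2 * c + 3 * k) := by
    refine le_of_sq_le_sq ?_ (by positivity)
    calc (2 * A * ((c : ℝ) + 2 * k) ^ 2) ^ 2
        = 4 * ((c : ℝ) + 2 * k) * (A ^ 2 * ((c : ℝ) + 2 * k) ^ 3) := by ring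
      _ ≤ 4 * ((c : ℝ) + 2 * k) * ((c : ℝ) + k) ^ 3 := by
          gcongr; exact recAlpha_sq_mul_le c hk
      _ ≤ (((c : ℝ) + k) * (2 * c + 3 * k)) ^ 2 := by
          nlinarith [sq_nonneg (((c : ℝ) + k) * k)]
  have hB : 16 * c * B ≤ k := by
    refine le_of_sq_le_sq (le_of_mul_le_mul_right ?_ hc0) (by positivity)
    calc (16 * c * B) ^ 2 * c = 256 * (B ^ 2 * (c : ℝ) ^ 3) := by ring
      _ ≤ 256 := by linarith [recBeta_sq_mul_le c hk]
      _ ≤ k ^ 2 * c := by nlinarith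
  -- the `A`-bound has slack `k (2c² - 5ck - 15k²)`, which absorbs the `B`-bound for `c ≥ 10k`
  have hpoly : 16 * c * (((c : ℝ) + k) * (2 * c + 3 * k)) * (c + 2 * (5 / 8) * k)
      + 2 * k * ((c : ℝ) + 2 * k) ^ 2 * (c + 2 * (5 / 8) * k)
      ≤ 32 * c ^ 2 * ((c : ℝ) + 2 * k) ^ 2 := by
    obtain ⟨e, he, hce⟩ : ∃ e : ℝ, 0 ≤ e ∧ (c : ℝ) = 10 * k + e :=
      ⟨c - 10 * k, by linarith, by ring⟩
    have hk0 : (0 : ℝ) ≤ k := by linarith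
    rw [hce]
    nlinarith [mul_nonneg (mul_nonneg hk0 hk0) he, mul_nonneg (mul_nonneg hk0 he) he,
      mul_nonneg (mul_nonneg he he) he, pow_nonneg hk0 3]
  have hQ : (0 : ℝ) < 32 * c * ((c : ℝ) + 2 * k) ^ 2 := by positivity
  refine le_of_mul_le_mul_right ?_ hQ
  have hA' := mul_le_mul_of_nonneg_right hA
    (by positivity : (0 : ℝ) ≤ 16 * c * (c + 2 * (5 / 8) * k))
  have hB' := mul_le_mul_of_nonneg_right hB
    (by positivity : (0 : ℝ) ≤ 2 * ((c : ℝ) + 2 * k) ^ 2 * (c + 2 * (5 / 8) * k))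
  nlinarith

theorem stmt_11_general (k i : ℕ) (hk : 3 ≤ k) (d : ℕ → ℝ)
    (hrec : ∀ p : ℕ, d (p + 1) =
      ((i + p * k)! : ℝ) /
          Real.sqrt (((i + p * k - k)! : ℝ) * ((i + p * k + k)! : ℝ)) *
          (if p = 0 then 0 else d (p - 1))
        + Real.sqrt (((i + p * k)! : ℝ) / ((i + p * k + k)! : ℝ)) * d p) :
    Summable (fun p : ℕ => d p ^ 2) := by
  have hrec' : ∀ q, d (q + 2) =
      recAlpha k (i + q * k) * d q + recBeta k (i + q * k) * d (q + 1) := by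
    intro q
    have h := hrec (q + 1)
    rw [if_neg q.succ_ne_zero, show i + (q + 1) * k = i + q * k + k by ring,
      add_assoc (i + q * k) k k, ← two_mul] at h
    simp only [Nat.add_sub_cancel] at h
    exact h
  set n : ℕ → ℕ := fun q => i + (q + 10) * k
  have hn : ∀ q, 10 * k ≤ n q := fun q => by simp only [n]; nlinarith
  have hn_pos : ∀ q, (0 : ℝ) < n q := fun q => by
    have := hn q; exact_mod_cast (by omega : 0 < n q)
  have hn_succ : ∀ q, (n (q + 1) : ℝ) = n q + k := fun q => by simp only [n]; push_cast; ring
  apply (summable_nat_add_iff 10).mp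
  refine summable_sq_of_recurrence (a := fun q => recAlpha k (n q))
    (b := fun q => recBeta k (n q)) (w := fun q => (n q : ℝ) ^ (-(5 / 8 : ℝ)))
    (fun q => recAlpha_nonneg _ _) (fun q => recBeta_nonneg _ _)
    (fun q => Real.rpow_pos_of_pos (hn_pos q) _) (fun q => hrec' (q + 10)) (fun q => ?_) ?_
  · simp only [hn_succ, add_assoc, ← two_mul]
    exact mul_rpow_neg_add_mul_rpow_neg_le (by norm_num) (by norm_num) (hn_pos q) (by positivity)
      (recBeta_nonneg _ _) (recAlpha_add_recBeta_le hk (hn q))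
  · have hinj : Function.Injective n := StrictMono.injective fun a b hab => by
      simp only [n]; gcongr
    have hsum : Summable fun m : ℕ => ((m : ℝ) ^ (-(5 / 8 : ℝ))) ^ 2 := by
      simp_rw [← Real.rpow_natCast, ← Real.rpow_mul (Nat.cast_nonneg _)]
      exact Real.summable_nat_rpow.mpr (by norm_num)
    exact hsum.comp_injective hinj

/-- Square summability of `(d_p)`. -/
theorem stmt_11 (k i : ℕ) (hk : 3 ≤ k) (hi : i ≤ k - 1) (d : ℕ → ℝ)
    (hd0 : d 0 = 1)
    (hrec : ∀ p : ℕ, d (p + 1) =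
      ((i + p * k)! : ℝ) /
          Real.sqrt (((i + p * k - k)! : ℝ) * ((i + p * k + k)! : ℝ)) *
          (if p = 0 then 0 else d (p - 1))
        + Real.sqrt (((i + p * k)! : ℝ) / ((i + p * k + k)! : ℝ)) * d p) :
    Summable (fun p : ℕ => d p ^ 2) :=
  stmt_11_general k i hk d hrec
end

section
/- Let A be a symmetric operator on a complex Hilbert space whose matrix with respect to an orthonormal basis (e_p) is tridiagonal with zero diagonal: A e_p = b_p·e_{p+1} + c_p·e_{p-1} with b_p = -i·e^{iθ}·√(((i+(p+1)k)!)/((i+pk)!)), c_p = conj(b_{p-1}), defined on the span of the basis, where k ≥ 3 and 0 ≤ i ≤ k-1. If ∑_p d_p² < ∞ for the positive solution (d_p) of the associated recurrence d_{p+1} = ((i+pk)!/√((i+pk-k)!(i+pk+k)!))·d_{p-1} + √((i+pk)!/(i+pk+k)!)·d_p with d_{-1}=0, d_0=1, then there exists a nonzero f in the Hilbert space with ⟨(A+i)e_p, f⟩ = 0 for all p; i.e., A is not essentially selfadjoint. -/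
open Nat ComplexConjugate

/-!
Put `s p = √((i + (p+1)k)! / (i + pk)!)`, so that `b p = -I ω s p` with `ω = exp(Iθ)`.
Dividing the recurrence by `s p` turns it into the real Jacobi equation
`s p d (p+1) = s (p-1) d (p-1) + d p`. Twisting by the phase, `g p = ω ^ p d p`
solves `conj (b p) g (p+1) + conj (c p) g (p-1) = I g p`, which says exactly that
`f = ∑ g p e p` is orthogonal to every `(A + I) e p`. The vector `f` exists because
`‖g p‖ = |d p|` is square-summable, and it is nonzero because `⟪e 0, f⟫ = d 0 = 1`.
-/

section Orthonormal

variable {𝕜 ι E : Type*} [RCLike 𝕜] [NormedAddCommGroup E] [InnerProductSpace 𝕜 E]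
  [CompleteSpace E] {e : ι → E}

theorem Orthonormal.summable_smul (he : Orthonormal 𝕜 e) {g : ι → 𝕜}
    (hg : Summable fun p => ‖g p‖ ^ 2) : Summable fun p => g p • e p := by
  simpa using (he.orthogonalFamily.summable_iff_norm_sq_summable g).mpr hg

theorem Orthonormal.inner_right_tsum (he : Orthonormal 𝕜 e) {g : ι → 𝕜}
    (hg : Summable fun p => ‖g p‖ ^ 2) (q : ι) :
    inner 𝕜 (e q) (∑' p, g p • e p) = g q := by
  classical
  rw [← innerSL_apply_apply, (innerSL 𝕜 (e q)).map_tsum (he.summable_smul hg)]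
  simp_rw [innerSL_apply_apply, inner_smul_right, orthonormal_iff_ite.mp he, mul_ite,
    mul_one, mul_zero]
  exact tsum_ite_eq' q g

end Orthonormal

theorem sqrt_div_mul_div_sqrt_mul {A B C : ℝ} (hA : 0 < A) (hB : 0 < B) (hC : 0 < C) :
    √(B / A) * (A / √(C * B)) = √(A / C) := by
  rw [Real.sqrt_div hB.le, Real.sqrt_div hA.le, Real.sqrt_mul hC.le]
  have := Real.sqrt_pos.mpr hA
  have := Real.sqrt_pos.mpr hB
  have := Real.sqrt_pos.mpr hC
  field_simp
  exact (Real.sq_sqrt hA.le).symm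

theorem sqrt_div_mul_sqrt_div_self {A B : ℝ} (hA : 0 < A) (hB : 0 < B) :
    √(B / A) * √(A / B) = 1 := by
  rw [← Real.sqrt_mul (div_pos hB hA).le, div_mul_div_cancel₀ hA.ne', div_self hB.ne',
    Real.sqrt_one]

theorem jacobi_of_recurrence {F : ℕ → ℝ} (hF : ∀ n, 0 < F n) {i k : ℕ} {d : ℕ → ℝ}
    (hrec : ∀ p : ℕ, d (p + 1) =
      F (i + p * k) / √(F (i + p * k - k) * F (i + p * k + k)) *
          (if p = 0 then 0 else d (p - 1))
        + √(F (i + p * k) / F (i + p * k + k)) * d p)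
    {s : ℕ → ℝ} (hs : ∀ p, s p = √(F (i + (p + 1) * k) / F (i + p * k))) (p : ℕ) :
    s p * d (p + 1) = (if p = 0 then 0 else s (p - 1) * d (p - 1)) + d p := by
  have hnext : i + (p + 1) * k = i + p * k + k := by ring
  rw [hrec p, hs, hnext, mul_add, ← mul_assoc, ← mul_assoc,
    sqrt_div_mul_sqrt_div_self (hF _) (hF _), one_mul]
  rcases p with _ | q
  · simp
  · have hprev : i + (q + 1) * k - k = i + q * k := by rw [add_one_mul]; omega
    simp only [add_eq_zero, one_ne_zero, and_false, if_false, add_tsub_cancel_right, hprev, hs]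
    rw [sqrt_div_mul_div_sqrt_mul (hF _) (hF _) (hF _)]

theorem jacobi_twist_eq_zero {s d : ℕ → ℝ} {ω : ℂ} (hω : ‖ω‖ = 1) {b c : ℕ → ℂ}
    (hb : ∀ p, b p = -Complex.I * ω * s p) (hc : ∀ p, c (p + 1) = conj (b p))
    (hjac : ∀ p, s p * d (p + 1) = (if p = 0 then 0 else s (p - 1) * d (p - 1)) + d p)
    (p : ℕ) :
    conj (b p) * (ω ^ (p + 1) * d (p + 1)) +
        (if p = 0 then 0 else conj (c p) * (ω ^ (p - 1) * d (p - 1))) +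
      conj Complex.I * (ω ^ p * d p) = 0 := by
  have hunit : conj ω * ω = 1 := by rw [Complex.conj_mul', hω]; norm_num
  have hjacC := congrArg Complex.ofReal (hjac p)
  rcases p with _ | q
  · simp only [if_true, Complex.ofReal_mul, zero_add] at hjacC ⊢
    simp only [hb, map_mul, map_neg, Complex.conj_I, Complex.conj_ofReal]
    linear_combination Complex.I * (s 0 * d 1 : ℂ) * hunit + Complex.I * hjacC
  · simp only [add_eq_zero, one_ne_zero, and_false, if_false, add_tsub_cancel_right,
      Complex.ofReal_add, Complex.ofReal_mul] at hjacC ⊢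
    simp only [hc, hb, map_mul, map_neg, Complex.conj_I, Complex.conj_ofReal,
      Complex.conj_conj]
    linear_combination Complex.I * ω ^ (q + 1) * hjacC +
      Complex.I * ω ^ (q + 1) * (s (q + 1) * d (q + 2) : ℂ) * hunit

theorem stmt_19_general {H : Type*} [NormedAddCommGroup H] [InnerProductSpace ℂ H]
    [CompleteSpace H]
    (e : ℕ → H) (he : Orthonormal ℂ e)
    (k i : ℕ) (θ : ℝ)
    (b : ℕ → ℂ)
    (hb : ∀ p : ℕ, b p = -Complex.I * Complex.exp (Complex.I * θ) *
      (Real.sqrt (((i + (p + 1) * k)! : ℝ) / ((i + p * k)! : ℝ)) : ℂ))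
    (c : ℕ → ℂ) (hc : ∀ p : ℕ, c (p + 1) = (starRingEnd ℂ) (b p))
    (Ae : ℕ → H)
    (hAe : ∀ p : ℕ, Ae p = b p • e (p + 1) +
      (if p = 0 then 0 else c p • e (p - 1)))
    (d : ℕ → ℝ)
    (hd0 : d 0 = 1)
    (hrec : ∀ p : ℕ, d (p + 1) =
      ((i + p * k)! : ℝ) /
          Real.sqrt (((i + p * k - k)! : ℝ) * ((i + p * k + k)! : ℝ)) *
          (if p = 0 then 0 else d (p - 1))
        + Real.sqrt (((i + p * k)! : ℝ) / ((i + p * k + k)! : ℝ)) * d p)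
    (hsum : Summable (fun p : ℕ => d p ^ 2)) :
    ∃ f : H, f ≠ 0 ∧ ∀ p : ℕ, (inner ℂ (Ae p + Complex.I • e p) f : ℂ) = 0 := by
  have hω : ‖Complex.exp (Complex.I * θ)‖ = 1 := by
    rw [mul_comm]; exact Complex.norm_exp_ofReal_mul_I θ
  set ω := Complex.exp (Complex.I * θ)
  set s : ℕ → ℝ := fun p => √(((i + (p + 1) * k)! : ℝ) / ((i + p * k)! : ℝ))
  have hjac := jacobi_of_recurrence (F := fun n => (n ! : ℝ)) (fun n => by positivity) hrec
    (s := s) fun _ => rfl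
  set g : ℕ → ℂ := fun p => ω ^ p * d p
  have hg : Summable fun p => ‖g p‖ ^ 2 := by
    simpa [g, hω, sq_abs] using hsum
  have hcoef := he.inner_right_tsum hg
  refine ⟨∑' p, g p • e p, fun h0 => ?_, fun p => ?_⟩
  · simpa [h0, g, hd0] using hcoef 0
  · have := jacobi_twist_eq_zero (s := s) hω hb hc hjac p
    rw [hAe p, inner_add_left, inner_add_left, inner_smul_left, inner_smul_left, hcoef, hcoef]
    split_ifs at this ⊢
    · rwa [inner_zero_left]
    · rwa [inner_smul_left, hcoef]

/-- If the positive solution `(d_p)` of the associated recurrence is square-summable, then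
there is a nonzero deficiency vector `f` orthogonal to `(A + i)e_p` for all `p`, where the
Jacobi-type operator `A` acts on the basis by `A e_p = b_p e_{p+1} + c_p e_{p-1}`
(`c_0` term absent); hence `A` is not essentially selfadjoint. -/
theorem stmt_19 {H : Type*} [NormedAddCommGroup H] [InnerProductSpace ℂ H]
    [CompleteSpace H]
    (e : ℕ → H) (he : Orthonormal ℂ e)
    (k i : ℕ) (hk : 3 ≤ k) (hi : i ≤ k - 1) (θ : ℝ)
    (b : ℕ → ℂ)
    (hb : ∀ p : ℕ, b p = -Complex.I * Complex.exp (Complex.I * θ) *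
      (Real.sqrt (((i + (p + 1) * k)! : ℝ) / ((i + p * k)! : ℝ)) : ℂ))
    (c : ℕ → ℂ) (hc : ∀ p : ℕ, c (p + 1) = (starRingEnd ℂ) (b p))
    (Ae : ℕ → H)
    (hAe : ∀ p : ℕ, Ae p = b p • e (p + 1) +
      (if p = 0 then 0 else c p • e (p - 1)))
    (d : ℕ → ℝ)
    (hd0 : d 0 = 1)
    (hrec : ∀ p : ℕ, d (p + 1) =
      ((i + p * k)! : ℝ) /
          Real.sqrt (((i + p * k - k)! : ℝ) * ((i + p * k + k)! : ℝ)) *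
          (if p = 0 then 0 else d (p - 1))
        + Real.sqrt (((i + p * k)! : ℝ) / ((i + p * k + k)! : ℝ)) * d p)
    (hdpos : ∀ p : ℕ, 0 < d p)
    (hsum : Summable (fun p : ℕ => d p ^ 2)) :
    ∃ f : H, f ≠ 0 ∧ ∀ p : ℕ, (inner ℂ (Ae p + Complex.I • e p) f : ℂ) = 0 :=
  stmt_19_general e he k i θ b hb c hc Ae hAe d hd0 hrec hsum
end
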